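/- arXiv:2402.13863 — 9 statements merged into one kernel-verified Lean document; each statement's English description precedes it below -/
import Mathlib

section
/- Let L ≥ 2 and consider the L×L grid graph with vertex set [L]×[L]. Let {(v_{i_r}, v_{j_r})}_{r=1}^k be pairs of vertices with coordinates v_{i_r}=(X_r,Y_r), v_{j_r}=(X'_r,Y'_r), such that for all distinct p,q ∈ [k] we have {X_p, X'_p} ∩ {X_q, X'_q} = ∅ and {Y_p, Y'_p} ∩ {Y_q, Y'_q} = ∅. Then there exists a family {π_r}_{r=1}^k of pairwise edge-disjoint paths in the grid graph such that π_r connects v_{i_r} and v_{j_r}, and the length of π_r equals the L¹ (Manhattan) distance between v_{i_r} and v_{j_r}. -/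
/-!
Route pair `r` first horizontally along row `Y r` from `X r` to `X' r`, then vertically along
column `X' r` from `Y r` to `Y' r`. Distinct pairs use distinct rows and distinct columns, so two
horizontal (or two vertical) segments never share an edge, and a horizontal edge is never a
vertical one. Such an L-shaped walk realises the grid distance, hence is a path.
-/

open SimpleGraph

namespace SimpleGraph

theorem Walk.dist_val_le_length_pathGraph {n : ℕ} {a b : Fin n} (w : (pathGraph n).Walk a b) :
    Nat.dist a b ≤ w.length := by
  induction w with
  | nil => simp
  | cons h _ ih =>
    rw [pathGraph_adj] at h
    simp only [Walk.length_cons]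
    unfold Nat.dist at ih ⊢
    omega

theorem pathGraph_exists_walk_length {n : ℕ} (i : ℕ) :
    ∀ (d : ℕ) (h : i + d < n), ∃ w : (pathGraph n).Walk ⟨i, by omega⟩ ⟨i + d, h⟩, w.length = d
  | 0, _ => ⟨Walk.nil, rfl⟩
  | d + 1, h => by
    obtain ⟨w, hw⟩ := pathGraph_exists_walk_length (n := n) i d (by omega)
    have hadj : (pathGraph n).Adj ⟨i + d, by omega⟩ ⟨i + (d + 1), h⟩ := by
      rw [pathGraph_adj]; left; rfl
    exact ⟨w.concat hadj, by rw [Walk.length_concat, hw]⟩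

theorem pathGraph_dist {n : ℕ} (a b : Fin n) : (pathGraph n).dist a b = Nat.dist a b := by
  wlog hab : a ≤ b generalizing a b
  · rw [dist_comm, Nat.dist_comm, this b a (le_of_not_ge hab)]
  obtain ⟨w, hw⟩ := (pathGraph_preconnected n a b).exists_walk_length_eq_dist
  refine le_antisymm ?_ (hw ▸ w.dist_val_le_length_pathGraph)
  obtain ⟨v, hv⟩ := pathGraph_exists_walk_length (n := n) a (b - a) (by omega)
  have hb : (⟨a + (b - a), by omega⟩ : Fin n) = b := Fin.ext (by simp; omega)
  calc (pathGraph n).dist a b ≤ (v.copy rfl hb).length := dist_le _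
    _ = Nat.dist a b := by rw [Walk.length_copy, hv, Nat.dist]; omega

variable {α β : Type*} {G : SimpleGraph α} {H : SimpleGraph β}

theorem dist_boxProd {x y : α × β} (hG : G.Reachable x.1 y.1) (hH : H.Reachable x.2 y.2) :
    (G □ H).dist x y = G.dist x.1 y.1 + H.dist x.2 y.2 := by
  simp only [SimpleGraph.dist, edist_boxProd]
  exact ENat.toNat_add (edist_ne_top_iff_reachable.mpr hG) (edist_ne_top_iff_reachable.mpr hH)

namespace Walk

def elbow {a₁ a₂ : α} {b₁ b₂ : β} (p : G.Walk a₁ a₂) (q : H.Walk b₁ b₂) :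
    (G □ H).Walk (a₁, b₁) (a₂, b₂) :=
  (p.boxProdLeft H b₁).append (q.boxProdRight G a₂)

variable {a₁ a₂ : α} {b₁ b₂ : β} (p : G.Walk a₁ a₂) (q : H.Walk b₁ b₂)

theorem length_elbow : (p.elbow q).length = p.length + q.length := by
  rw [elbow, length_append]
  exact congrArg₂ (· + ·) (p.length_map _) (q.length_map _)

theorem isPath_elbow (hp : p.length = G.dist a₁ a₂) (hq : q.length = H.dist b₁ b₂) :
    (p.elbow q).IsPath := by
  refine (p.elbow q).isPath_of_length_eq_dist ?_
  rw [length_elbow, dist_boxProd p.reachable q.reachable, hp, hq]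

theorem mem_edges_elbow {e : Sym2 (α × β)} (he : e ∈ (p.elbow q).edges) :
    (∀ z ∈ e, z.2 = b₁) ∨ (∀ z ∈ e, z.1 = a₂) := by
  rw [elbow, edges_append, List.mem_append] at he
  refine he.imp (fun he z hz => ?_) (fun he z hz => ?_)
  · obtain ⟨x, -, rfl⟩ := List.mem_map.mp (support_map _ p ▸ mem_support_of_mem_edges he hz)
    rfl
  · obtain ⟨y, -, rfl⟩ := List.mem_map.mp (support_map _ q ▸ mem_support_of_mem_edges he hz)
    rfl

theorem notMem_edges_elbow_of_ne {a₁' a₂' : α} {b₁' b₂' : β} (p' : G.Walk a₁' a₂')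
    (q' : H.Walk b₁' b₂') (hb : b₁ ≠ b₁') (ha : a₂ ≠ a₂') {e : Sym2 (α × β)}
    (he : e ∈ (p.elbow q).edges) : e ∉ (p'.elbow q').edges := by
  intro he'
  induction e using Sym2.ind with
  | _ u v =>
    have huv := ((p.elbow q).adj_of_mem_edges he).ne
    rcases mem_edges_elbow p q he with h | h <;> rcases mem_edges_elbow p' q' he' with h' | h' <;>
      simp only [Sym2.mem_iff, forall_eq_or_imp, forall_eq] at h h'
    · exact hb (h.1.symm.trans h'.1)
    · exact huv (Prod.ext (h'.1.trans h'.2.symm) (h.1.trans h.2.symm))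
    · exact huv (Prod.ext (h.1.trans h.2.symm) (h'.1.trans h'.2.symm))
    · exact ha (h.1.symm.trans h'.1)

end Walk

end SimpleGraph

theorem stmt0_general (L k : ℕ)
    (X Y X' Y' : Fin k → Fin L)
    (hX : ∀ p q : Fin k, p ≠ q → ({X p, X' p} : Set (Fin L)) ∩ {X q, X' q} = ∅)
    (hY : ∀ p q : Fin k, p ≠ q → ({Y p, Y' p} : Set (Fin L)) ∩ {Y q, Y' q} = ∅) :
    ∃ π : (r : Fin k) →
        ((pathGraph L).boxProd (pathGraph L)).Walk (X r, Y r) (X' r, Y' r),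
      (∀ r, (π r).IsPath) ∧
      (∀ r s : Fin k, r ≠ s → ∀ e, e ∈ (π r).edges → e ∉ (π s).edges) ∧
      (∀ r, (π r).length = Nat.dist (X r).1 (X' r).1 + Nat.dist (Y r).1 (Y' r).1) := by
  choose wx hwx using fun r => (pathGraph_preconnected L (X r) (X' r)).exists_walk_length_eq_dist
  choose wy hwy using fun r => (pathGraph_preconnected L (Y r) (Y' r)).exists_walk_length_eq_dist
  refine ⟨fun r => (wx r).elbow (wy r), fun r => Walk.isPath_elbow _ _ (hwx r) (hwy r),
    fun r s hrs e he => Walk.notMem_edges_elbow_of_ne _ _ _ _ ?_ ?_ he,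
    fun r => by rw [Walk.length_elbow, hwx, hwy, pathGraph_dist, pathGraph_dist]⟩
  · exact fun h => (Set.eq_empty_iff_forall_notMem.mp (hY r s hrs)) (Y r) ⟨by simp, by simp [h]⟩
  · exact fun h => (Set.eq_empty_iff_forall_notMem.mp (hX r s hrs)) (X' r) ⟨by simp, by simp [h]⟩

/-- In the `L × L` grid graph (`L ≥ 2`), given pairs of vertices
`(Xᵣ,Yᵣ), (X'ᵣ,Y'ᵣ)` whose x-coordinate sets and y-coordinate sets are pairwise
disjoint across different pairs, there is a family of pairwise edge-disjoint paths
connecting each pair, with length equal to the Manhattan distance. -/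
theorem stmt0 (L k : ℕ) (hL : 2 ≤ L)
    (X Y X' Y' : Fin k → Fin L)
    (hX : ∀ p q : Fin k, p ≠ q → ({X p, X' p} : Set (Fin L)) ∩ {X q, X' q} = ∅)
    (hY : ∀ p q : Fin k, p ≠ q → ({Y p, Y' p} : Set (Fin L)) ∩ {Y q, Y' q} = ∅) :
    ∃ π : (r : Fin k) →
        ((pathGraph L).boxProd (pathGraph L)).Walk (X r, Y r) (X' r, Y' r),
      (∀ r, (π r).IsPath) ∧
      (∀ r s : Fin k, r ≠ s → ∀ e, e ∈ (π r).edges → e ∉ (π s).edges) ∧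
      (∀ r, (π r).length = Nat.dist (X r).1 (X' r).1 + Nat.dist (Y r).1 (Y' r).1) :=
  stmt0_general L k X Y X' Y' hX hY
end

section
/- Let L be even. The L×L grid graph contains a set S of L vertices (namely the diagonal S = {(i,i) : i ∈ [L]}) such that for every perfect pairing of S into L/2 pairs, there exists a family of L/2 pairwise edge-disjoint paths connecting the vertices within each pair. Consequently the parallel routing number of P_L × P_L is at least L/2. -/
open SimpleGraph

/-- `a, b : Fin k → V` form a pairing of the set `S` into `k` pairs: all the `2k`
values are distinct and they exhaust `S`. -/
def IsPairing {V : Type*} (S : Finset V) {k : ℕ} (a b : Fin k → V) : Prop :=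
  Function.Injective (Sum.elim a b : Fin k ⊕ Fin k → V) ∧
  ∀ v, v ∈ S ↔ ((∃ r, a r = v) ∨ ∃ r, b r = v)

/-- A subset `S` of vertices of `G` is parallel-routable: it has even size and for
every pairing of its elements there is a family of pairwise edge-disjoint paths
connecting the pairs. -/
def ParallelRoutable {V : Type*} (G : SimpleGraph V) (S : Finset V) : Prop :=
  Even S.card ∧
  ∀ (k : ℕ) (a b : Fin k → V), IsPairing S a b →
    ∃ π : (r : Fin k) → G.Walk (a r) (b r),
      (∀ r, (π r).IsPath) ∧
      ∀ r s : Fin k, r ≠ s → ∀ e, e ∈ (π r).edges → e ∉ (π s).edges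

/-!
Route the pair `(u, v)` along an L-shaped path: first inside the fibre `{u.1} × H`, then
inside the fibre `G × {v.2}`. Every edge of this route either keeps the first coordinate
equal to `u.1` or keeps the second coordinate equal to `v.2`. If no two points of `S` share
a first or a second coordinate, two routes with different starts use different vertical
fibres and two routes with different ends use different horizontal fibres; and since an
edge of `G □ H` changes exactly one coordinate, no edge lies both in a vertical and in a
horizontal fibre. The diagonal of `P_L × P_L` is such a set.
-/

namespace SimpleGraph.Walk

variable {α β : Type*} {G : SimpleGraph α} {H : SimpleGraph β}

lemma snd_eq_of_mem_edges_boxProdLeft {a₁ a₂ : α} {b : β} {w : G.Walk a₁ a₂}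
    {e : Sym2 (α × β)} (he : e ∈ (w.boxProdLeft H b).edges) {x : α × β} (hx : x ∈ e) :
    x.2 = b := by
  replace he : e ∈ (w.map (G.boxProdLeft H b).toHom).edges := he
  rw [edges_map] at he
  obtain ⟨e', -, rfl⟩ := List.mem_map.mp he
  obtain ⟨y, -, rfl⟩ := Sym2.mem_map.mp hx
  rfl

lemma fst_eq_of_mem_edges_boxProdRight {a : α} {b₁ b₂ : β} {w : H.Walk b₁ b₂}
    {e : Sym2 (α × β)} (he : e ∈ (w.boxProdRight G a).edges) {x : α × β} (hx : x ∈ e) :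
    x.1 = a := by
  replace he : e ∈ (w.map (G.boxProdRight H a).toHom).edges := he
  rw [edges_map] at he
  obtain ⟨e', -, rfl⟩ := List.mem_map.mp he
  obtain ⟨y, -, rfl⟩ := Sym2.mem_map.mp hx
  rfl

end SimpleGraph.Walk

section BoxProd

variable {α β : Type*} {G : SimpleGraph α} {H : SimpleGraph β}

lemma SimpleGraph.Preconnected.exists_isPath_boxProd_edges_fst_or_snd (hG : G.Preconnected)
    (hH : H.Preconnected) (u v : α × β) :
    ∃ p : (G □ H).Walk u v, p.IsPath ∧
      ∀ e ∈ p.edges, (∀ x ∈ e, x.1 = u.1) ∨ (∀ x ∈ e, x.2 = v.2) := by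
  classical
  obtain ⟨q⟩ := hH u.2 v.2
  obtain ⟨p⟩ := hG u.1 v.1
  let w : (G □ H).Walk u v := (q.boxProdRight G u.1).append (p.boxProdLeft H v.2)
  refine ⟨w.bypass, w.bypass_isPath, fun e he => ?_⟩
  have he' := w.edges_bypass_subset_edges he
  rw [Walk.edges_append, List.mem_append] at he'
  rcases he' with he' | he'
  · exact Or.inl fun x hx => Walk.fst_eq_of_mem_edges_boxProdRight he' hx
  · exact Or.inr fun x hx => Walk.snd_eq_of_mem_edges_boxProdLeft he' hx

lemma parallelRoutable_boxProd_of_injOn (hG : G.Preconnected) (hH : H.Preconnected)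
    {S : Finset (α × β)} (hS : Even S.card) (hfst : Set.InjOn Prod.fst (S : Set (α × β)))
    (hsnd : Set.InjOn Prod.snd (S : Set (α × β))) : ParallelRoutable (G □ H) S := by
  refine ⟨hS, fun k a b ⟨hinj, hcov⟩ => ?_⟩
  have haS : ∀ r, a r ∈ S := fun r => (hcov _).mpr (Or.inl ⟨r, rfl⟩)
  have hbS : ∀ r, b r ∈ S := fun r => (hcov _).mpr (Or.inr ⟨r, rfl⟩)
  have ha : Function.Injective a := hinj.comp Sum.inl_injective
  have hb : Function.Injective b := hinj.comp Sum.inr_injective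
  choose π hπ hedges using fun r => hG.exists_isPath_boxProd_edges_fst_or_snd hH (a r) (b r)
  refine ⟨π, hπ, fun r s hrs e her hes => ?_⟩
  induction e using Sym2.ind with | _ x y => ?_
  have hxy : x ≠ y := ((π r).adj_of_mem_edges her).ne
  have hx : x ∈ s(x, y) := Sym2.mem_mk_left x y
  have hy : y ∈ s(x, y) := Sym2.mem_mk_right x y
  rcases hedges r _ her with hr | hr <;> rcases hedges s _ hes with hs | hs
  · exact hrs (ha (hfst (haS r) (haS s) ((hr x hx).symm.trans (hs x hx))))
  · exact hxy (Prod.ext ((hr x hx).trans (hr y hy).symm) ((hs x hx).trans (hs y hy).symm))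
  · exact hxy (Prod.ext ((hs x hx).trans (hs y hy).symm) ((hr x hx).trans (hr y hy).symm))
  · exact hrs (hb (hsnd (hbS r) (hbS s) ((hr x hx).symm.trans (hs x hx))))

end BoxProd

theorem stmt1_general (L : ℕ) (hL : Even L) :
    (Finset.image (fun i : Fin L => ((i, i) : Fin L × Fin L)) Finset.univ).card = L ∧
    ParallelRoutable ((pathGraph L).boxProd (pathGraph L))
      (Finset.image (fun i : Fin L => ((i, i) : Fin L × Fin L)) Finset.univ) := by
  have hcard :
      (Finset.image (fun i : Fin L => ((i, i) : Fin L × Fin L)) Finset.univ).card = L := by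
    rw [Finset.card_image_of_injective _ fun i j h => congrArg Prod.fst h, Finset.card_fin]
  refine ⟨hcard, parallelRoutable_boxProd_of_injOn (pathGraph_preconnected L)
    (pathGraph_preconnected L) (hcard.symm ▸ hL) ?_ ?_⟩ <;>
  · simp only [Finset.coe_image, Finset.coe_univ, Set.image_univ]
    rintro _ ⟨i, rfl⟩ _ ⟨j, rfl⟩ h
    rw [show i = j from h]

/-- for even `L`, the diagonal of the `L × L` grid graph is a
parallel-routable set of `L` vertices; hence `k(P_L × P_L) ≥ L/2`. -/
theorem stmt1 (L : ℕ) (hL : Even L) (hpos : 0 < L) :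
    (Finset.image (fun i : Fin L => ((i, i) : Fin L × Fin L)) Finset.univ).card = L ∧
    ParallelRoutable ((pathGraph L).boxProd (pathGraph L))
      (Finset.image (fun i : Fin L => ((i, i) : Fin L × Fin L)) Finset.univ) :=
  stmt1_general L hL
end

section
/- Let L ≥ 2 be even and consider the grid graph P_L × P_L × P_{4L} with the bottom face vertices [L]²×{1}. For any pairing {(v_{i_r}, v_{j_r})}_{r=1}^{L²/2} of the L² bottom-face vertices, there exists a family {π_r}_{r=1}^{L²/2} of pairwise edge-disjoint paths such that π_r connects v_{i_r} and v_{j_r}, and each path π_r has length at most 10L. -/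
open SimpleGraph

open Classical in
noncomputable def greedy (conf : ℕ → ℕ → Prop) : ℕ → ℕ
  | r => sInf {c : ℕ | ∀ s, s < r → conf s r → greedy conf s ≠ c}
  termination_by r => r

lemma greedy_spec (conf : ℕ → ℕ → Prop) (r s : ℕ) (hs : s < r) (hc : conf s r) :
    greedy conf s ≠ greedy conf r := by
  have h : greedy conf r ∈ {c : ℕ | ∀ s, s < r → conf s r → greedy conf s ≠ c} := by
    rw [greedy]
    apply Nat.sInf_mem
    refine ⟨((Finset.range r).image (greedy conf)).sup id + 1, fun s hs _ h => ?_⟩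
    have : greedy conf s ≤ ((Finset.range r).image (greedy conf)).sup id :=
      Finset.le_sup (f := id) (Finset.mem_image_of_mem _ (Finset.mem_range.mpr hs))
    omega
  exact h s hs hc

lemma greedy_le (conf : ℕ → ℕ → Prop) (r D : ℕ)
    (hD : ∀ T : Finset ℕ, (∀ s ∈ T, s < r ∧ conf s r) → T.card ≤ D) :
    greedy conf r ≤ D := by
  classical
  set B : Finset ℕ := ((Finset.range r).filter (fun s => conf s r)).image (greedy conf) with hB
  have hBcard : B.card ≤ D := by
    refine le_trans Finset.card_image_le (hD _ (fun s hs => ?_))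
    simp only [Finset.mem_filter, Finset.mem_range] at hs
    exact hs
  have hex : ∃ c ∈ Finset.range (D + 1), c ∉ B := by
    by_contra hcon
    push_neg at hcon
    have := Finset.card_le_card hcon
    simp only [Finset.card_range] at this
    omega
  obtain ⟨c, hc1, hc2⟩ := hex
  have hmem : c ∈ {c : ℕ | ∀ s, s < r → conf s r → greedy conf s ≠ c} := by
    intro s hs hcs he
    exact hc2 (Finset.mem_image.mpr ⟨s, Finset.mem_filter.mpr
      ⟨Finset.mem_range.mpr hs, hcs⟩, he⟩)
  have h1 : greedy conf r ≤ c := by rw [greedy]; exact Nat.sInf_le hmem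
  have := Finset.mem_range.mp hc1
  omega

lemma pg_walk_aux (n : ℕ) (d : ℕ) : ∀ (i j : ℕ) (hi : i < n) (hj : j < n), i + d = j →
    ∃ w : (pathGraph n).Walk ⟨i, hi⟩ ⟨j, hj⟩, w.length = d := by
  induction d with
  | zero =>
    intro i j hi hj h
    obtain rfl : i = j := by omega
    exact ⟨Walk.nil, rfl⟩
  | succ d ih =>
    intro i j hi hj h
    have hi1 : i + 1 < n := by omega
    obtain ⟨w, hw⟩ := ih (i + 1) j hi1 hj (by omega)
    refine ⟨Walk.cons ?_ w, by rw [Walk.length_cons, hw]⟩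
    exact pathGraph_adj.mpr (Or.inl rfl)

lemma pg_walk (n : ℕ) (i j : Fin n) :
    ∃ w : (pathGraph n).Walk i j, w.length ≤ max i.val j.val := by
  rcases le_total i.val j.val with h | h
  · obtain ⟨w, hw⟩ := pg_walk_aux n (j.val - i.val) i.val j.val i.2 j.2 (by omega)
    exact ⟨w, by omega⟩
  · obtain ⟨w, hw⟩ := pg_walk_aux n (i.val - j.val) j.val i.val j.2 i.2 (by omega)
    exact ⟨w.reverse, by rw [Walk.length_reverse]; omega⟩

lemma map_edge_shape {V W : Type*} {G : SimpleGraph V} {G' : SimpleGraph W} (f : G →g G')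
    {u v : V} (w : G.Walk u v) (e : Sym2 W) (he : e ∈ (w.map f).edges) :
    ∀ x ∈ e, ∃ y, x = f y := by
  rw [Walk.edges_map] at he
  obtain ⟨e0, _, rfl⟩ := List.mem_map.mp he
  intro x hx
  obtain ⟨y, _, rfl⟩ := Sym2.mem_map.mp hx
  exact ⟨y, rfl⟩

lemma grid_walk (L : ℕ) (hL : 2 ≤ L) (c1 c2 : Fin L × Fin L) (z : Fin (4 * L)) :
    ∃ w : (((pathGraph L).boxProd (pathGraph L)).boxProd (pathGraph (4 * L))).Walk
      (c1, (⟨0, by omega⟩ : Fin (4 * L))) (c2, (⟨0, by omega⟩ : Fin (4 * L))),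
      w.IsPath ∧ w.length ≤ 2 * z.val + 2 * L ∧
      ∀ e ∈ w.edges,
        (∀ x ∈ e, x.1 = c1) ∨ (∀ x ∈ e, x.1 = c2) ∨
        (∀ x ∈ e, x.2 = z ∧ x.1.2 = c1.2) ∨ (∀ x ∈ e, x.2 = z ∧ x.1.1 = c2.1) := by
  set G := ((pathGraph L).boxProd (pathGraph L)).boxProd (pathGraph (4 * L)) with hGdef
  obtain ⟨w1, h1⟩ := pg_walk (4 * L) ⟨0, by omega⟩ z
  obtain ⟨w2, h2⟩ := pg_walk L c1.1 c2.1
  obtain ⟨w3, h3⟩ := pg_walk L c1.2 c2.2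
  obtain ⟨w4, h4⟩ := pg_walk (4 * L) z ⟨0, by omega⟩
  let F1 : pathGraph (4 * L) →g G :=
    ⟨fun t => (c1, t), fun h => boxProd_adj.mpr (Or.inr ⟨h, rfl⟩)⟩
  let F4 : pathGraph (4 * L) →g G :=
    ⟨fun t => (c2, t), fun h => boxProd_adj.mpr (Or.inr ⟨h, rfl⟩)⟩
  let F2 : pathGraph L →g G :=
    ⟨fun t => ((t, c1.2), z), fun h =>
      boxProd_adj.mpr (Or.inl ⟨boxProd_adj.mpr (Or.inl ⟨h, rfl⟩), rfl⟩)⟩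
  let F3 : pathGraph L →g G :=
    ⟨fun t => ((c2.1, t), z), fun h =>
      boxProd_adj.mpr (Or.inl ⟨boxProd_adj.mpr (Or.inr ⟨h, rfl⟩), rfl⟩)⟩
  let W : G.Walk (c1, (⟨0, by omega⟩ : Fin (4 * L))) (c2, (⟨0, by omega⟩ : Fin (4 * L))) :=
    (w1.map F1).append ((w2.map F2).append ((w3.map F3).append (w4.map F4)))
  refine ⟨W.bypass, W.bypass_isPath, ?_, ?_⟩
  · refine le_trans W.length_bypass_le ?_
    have hw1 : w1.length ≤ z.val := by simpa using h1
    have hw4 : w4.length ≤ z.val := by simpa using h4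
    have hw2 : w2.length ≤ L - 1 := le_trans h2 (max_le (by omega) (by omega))
    have hw3 : w3.length ≤ L - 1 := le_trans h3 (max_le (by omega) (by omega))
    have : W.length = w1.length + (w2.length + (w3.length + w4.length)) := by
      simp [W, Walk.length_append, Walk.length_map]
    omega
  · intro e he
    have he' := W.edges_bypass_subset he
    simp only [W, Walk.edges_append, List.mem_append] at he'
    rcases he' with h | h | h | h
    · exact Or.inl (fun x hx => by
        obtain ⟨y, rfl⟩ := map_edge_shape F1 w1 e h x hx; rfl)
    · exact Or.inr (Or.inr (Or.inl (fun x hx => by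
        obtain ⟨y, rfl⟩ := map_edge_shape F2 w2 e h x hx; exact ⟨rfl, rfl⟩)))
    · exact Or.inr (Or.inr (Or.inr (fun x hx => by
        obtain ⟨y, rfl⟩ := map_edge_shape F3 w3 e h x hx; exact ⟨rfl, rfl⟩)))
    · exact Or.inr (Or.inl (fun x hx => by
        obtain ⟨y, rfl⟩ := map_edge_shape F4 w4 e h x hx; rfl))

lemma conflict_card (L k : ℕ) (hL : 1 ≤ L) (a b : Fin k → Fin L × Fin L)
    (ha : Function.Injective a) (hb : Function.Injective b) (r : Fin k) (T : Finset ℕ)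
    (hT : ∀ s ∈ T, ∃ h : s < k, s ≠ r.val ∧
      ((a ⟨s, h⟩).2 = (a r).2 ∨ (b ⟨s, h⟩).1 = (b r).1)) :
    T.card ≤ 2 * L - 2 := by
  classical
  set P : ℕ → Prop := fun s => ∃ h : s < k, s ≠ r.val ∧ (a ⟨s, h⟩).2 = (a r).2 with hP
  set Q : ℕ → Prop := fun s => ∃ h : s < k, s ≠ r.val ∧ (b ⟨s, h⟩).1 = (b r).1 with hQ
  have hsub : T ⊆ T.filter P ∪ T.filter Q := by
    intro s hs
    obtain ⟨h, hne, hor⟩ := hT s hs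
    rcases hor with h1 | h1
    · exact Finset.mem_union_left _ (Finset.mem_filter.mpr ⟨hs, ⟨h, hne, h1⟩⟩)
    · exact Finset.mem_union_right _ (Finset.mem_filter.mpr ⟨hs, ⟨h, hne, h1⟩⟩)
  have hA : (T.filter P).card ≤ L - 1 := by
    have := Finset.card_le_card_of_injOn
      (f := fun s => if h : s < k then (a ⟨s, h⟩).1 else ⟨0, hL⟩)
      (s := T.filter P) (t := Finset.univ.erase (a r).1) ?_ ?_
    · simpa [Finset.card_erase_of_mem] using this
    · intro s hs
      obtain ⟨h, hne, heq⟩ := (Finset.mem_filter.mp hs).2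
      simp only [dif_pos h]
      refine Finset.mem_erase.mpr ⟨fun hcon => ?_, Finset.mem_univ _⟩
      have : a ⟨s, h⟩ = a r := Prod.ext hcon heq
      exact hne (congrArg Fin.val (ha this))
    · intro s hs t ht hst
      obtain ⟨h1, _, he1⟩ := (Finset.mem_filter.mp hs).2
      obtain ⟨h2, _, he2⟩ := (Finset.mem_filter.mp ht).2
      simp only [dif_pos h1, dif_pos h2] at hst
      have : a ⟨s, h1⟩ = a ⟨t, h2⟩ := Prod.ext hst (he1.trans he2.symm)
      exact congrArg Fin.val (ha this)
  have hB : (T.filter Q).card ≤ L - 1 := by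
    have := Finset.card_le_card_of_injOn
      (f := fun s => if h : s < k then (b ⟨s, h⟩).2 else ⟨0, hL⟩)
      (s := T.filter Q) (t := Finset.univ.erase (b r).2) ?_ ?_
    · simpa [Finset.card_erase_of_mem] using this
    · intro s hs
      obtain ⟨h, hne, heq⟩ := (Finset.mem_filter.mp hs).2
      simp only [dif_pos h]
      refine Finset.mem_erase.mpr ⟨fun hcon => ?_, Finset.mem_univ _⟩
      have : b ⟨s, h⟩ = b r := Prod.ext heq hcon
      exact hne (congrArg Fin.val (hb this))
    · intro s hs t ht hst
      obtain ⟨h1, _, he1⟩ := (Finset.mem_filter.mp hs).2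
      obtain ⟨h2, _, he2⟩ := (Finset.mem_filter.mp ht).2
      simp only [dif_pos h1, dif_pos h2] at hst
      have : b ⟨s, h1⟩ = b ⟨t, h2⟩ := Prod.ext (he1.trans he2.symm) hst
      exact congrArg Fin.val (hb this)
  have h1 := Finset.card_le_card hsub
  have h2 := Finset.card_union_le (T.filter P) (T.filter Q)
  omega

/-- in the grid graph `P_L × P_L × P_{4L}` (`L ≥ 2` even), for any
pairing of the `L²` bottom-face vertices there is a family of pairwise
edge-disjoint paths connecting the paired vertices, each of length at most `10L`. -/
theorem stmt2 (L k : ℕ) (hL : 2 ≤ L) (hLe : Even L) (hk : 2 * k = L ^ 2)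
    (a b : Fin k → Fin L × Fin L)
    (hpair : IsPairing (Finset.univ : Finset (Fin L × Fin L)) a b) :
    ∃ π : (r : Fin k) →
        (((pathGraph L).boxProd (pathGraph L)).boxProd (pathGraph (4 * L))).Walk
          (a r, (⟨0, by omega⟩ : Fin (4 * L))) (b r, (⟨0, by omega⟩ : Fin (4 * L))),
      (∀ r, (π r).IsPath) ∧
      (∀ r s : Fin k, r ≠ s → ∀ e, e ∈ (π r).edges → e ∉ (π s).edges) ∧
      ∀ r, (π r).length ≤ 10 * L := by
  classical
  obtain ⟨hinj, hcov⟩ := hpair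
  have ha : Function.Injective a := fun r s h => by
    have := hinj (show Sum.elim a b (Sum.inl r) = Sum.elim a b (Sum.inl s) from h)
    simpa using this
  have hb : Function.Injective b := fun r s h => by
    have := hinj (show Sum.elim a b (Sum.inr r) = Sum.elim a b (Sum.inr s) from h)
    simpa using this
  have hab : ∀ r s, a r ≠ b s := fun r s h => by
    have := hinj (show Sum.elim a b (Sum.inl r) = Sum.elim a b (Sum.inr s) from h)
    simp at this
  set conf : ℕ → ℕ → Prop := fun s t =>
    ∃ (hs : s < k) (ht : t < k), s ≠ t ∧
      ((a ⟨s, hs⟩).2 = (a ⟨t, ht⟩).2 ∨ (b ⟨s, hs⟩).1 = (b ⟨t, ht⟩).1) with hconf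
  have hcol_le : ∀ r : Fin k, greedy conf r.val ≤ 2 * L - 2 := by
    intro r
    refine greedy_le conf r.val _ (fun T hT => ?_)
    refine conflict_card L k (by omega) a b ha hb r T (fun s hs => ?_)
    obtain ⟨hlt, hsk, hrk, hne, hor⟩ := hT s hs
    exact ⟨hsk, hne, hor⟩
  have hprop : ∀ r s : Fin k, r ≠ s → greedy conf r.val = greedy conf s.val →
      ¬((a r).2 = (a s).2 ∨ (b r).1 = (b s).1) := by
    intro r s hne heq hor
    have hvne : r.val ≠ s.val := fun h => hne (Fin.ext h)
    have hsymm : (a s).2 = (a r).2 ∨ (b s).1 = (b r).1 := Or.imp Eq.symm Eq.symm hor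
    rcases lt_or_gt_of_ne hvne with h | h
    · exact greedy_spec conf s.val r.val h ⟨r.2, s.2, hvne, hor⟩ heq
    · exact greedy_spec conf r.val s.val h ⟨s.2, r.2, Ne.symm hvne, hsymm⟩ heq.symm
  set lvl : Fin k → Fin (4 * L) :=
    fun r => ⟨greedy conf r.val, by have := hcol_le r; omega⟩ with hlvl
  have key : ∀ r : Fin k,
      ∃ w : (((pathGraph L).boxProd (pathGraph L)).boxProd (pathGraph (4 * L))).Walk
        (a r, (⟨0, by omega⟩ : Fin (4 * L))) (b r, (⟨0, by omega⟩ : Fin (4 * L))),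
      w.IsPath ∧ w.length ≤ 10 * L ∧
      ∀ e ∈ w.edges,
        (∀ x ∈ e, x.1 = a r) ∨ (∀ x ∈ e, x.1 = b r) ∨
        (∀ x ∈ e, x.2 = lvl r ∧ x.1.2 = (a r).2) ∨
        (∀ x ∈ e, x.2 = lvl r ∧ x.1.1 = (b r).1) := by
    intro r
    obtain ⟨w, hp, hlen, hsh⟩ := grid_walk L hL (a r) (b r) (lvl r)
    refine ⟨w, hp, ?_, hsh⟩
    have h1 : (lvl r).val = greedy conf r.val := rfl
    have := hcol_le r
    omega
  choose π hpath hlen hshape using key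
  refine ⟨π, hpath, ?_, hlen⟩
  intro r s hrs e her hes
  have heE := (π r).edges_subset_edgeSet her
  have hnd := (((pathGraph L).boxProd (pathGraph L)).boxProd
    (pathGraph (4 * L))).not_isDiag_of_mem_edgeSet heE
  have hSr := hshape r e her
  have hSs := hshape s e hes
  clear her hes heE
  revert hnd hSr hSs
  induction e using Sym2.ind with
  | _ u v =>
    intro hnd hSr hSs
    have hu : u ∈ (s(u, v) : Sym2 _) := Sym2.mem_mk_left u v
    have hv : v ∈ (s(u, v) : Sym2 _) := Sym2.mem_mk_right u v
    have hne : u ≠ v := fun h => hnd (Sym2.mk_isDiag_iff.mpr h)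
    -- helpers
    have hcc : ∀ c1 c2 : Fin L × Fin L, (∀ x ∈ (s(u, v) : Sym2 _), x.1 = c1) →
        (∀ x ∈ (s(u, v) : Sym2 _), x.1 = c2) → c1 = c2 :=
      fun c1 c2 h1 h2 => (h1 u hu).symm.trans (h2 u hu)
    have hch : ∀ c : Fin L × Fin L, (∀ x ∈ (s(u, v) : Sym2 _), x.1 = c) →
        u.2 = v.2 → False :=
      fun c h1 h2 => hne (Prod.ext ((h1 u hu).trans (h1 v hv).symm) h2)
    rcases hSr with h1 | h1 | h1 | h1 <;> rcases hSs with h2 | h2 | h2 | h2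
    · exact hrs (ha (hcc _ _ h1 h2))
    · exact hab r s (hcc _ _ h1 h2)
    · exact hch _ h1 ((h2 u hu).1.trans ((h2 v hv).1).symm)
    · exact hch _ h1 ((h2 u hu).1.trans ((h2 v hv).1).symm)
    · exact hab s r (hcc _ _ h2 h1)
    · exact hrs (hb (hcc _ _ h1 h2))
    · exact hch _ h1 ((h2 u hu).1.trans ((h2 v hv).1).symm)
    · exact hch _ h1 ((h2 u hu).1.trans ((h2 v hv).1).symm)
    · exact hch _ h2 ((h1 u hu).1.trans ((h1 v hv).1).symm)
    · exact hch _ h2 ((h1 u hu).1.trans ((h1 v hv).1).symm)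
    · -- x vs x
      have hl : lvl r = lvl s := ((h1 u hu).1).symm.trans ((h2 u hu).1)
      exact hprop r s hrs (congrArg Fin.val hl)
        (Or.inl (((h1 u hu).2).symm.trans ((h2 u hu).2)))
    · -- x vs y : all coordinates equal
      exact hne (Prod.ext (Prod.ext (((h2 u hu).2).trans ((h2 v hv).2).symm)
        (((h1 u hu).2).trans ((h1 v hv).2).symm))
        (((h1 u hu).1).trans ((h1 v hv).1).symm))
    · exact hch _ h2 ((h1 u hu).1.trans ((h1 v hv).1).symm)
    · exact hch _ h2 ((h1 u hu).1.trans ((h1 v hv).1).symm)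
    · -- y vs x
      exact hne (Prod.ext (Prod.ext (((h1 u hu).2).trans ((h1 v hv).2).symm)
        (((h2 u hu).2).trans ((h2 v hv).2).symm))
        (((h1 u hu).1).trans ((h1 v hv).1).symm))
    · -- y vs y
      have hl : lvl r = lvl s := ((h1 u hu).1).symm.trans ((h2 u hu).1)
      exact hprop r s hrs (congrArg Fin.val hl)
        (Or.inr (((h1 u hu).2).symm.trans ((h2 u hu).2)))
end

section
/- Let L ≥ 2. Consider a greedy floor-assignment process: given a pairing {((X_r,Y_r),(X'_r,Y'_r))}_{r=1}^{L²/2} of the L² points of [L]², process pairs in order r = 1, 2, ..., assigning pair r the smallest floor index Z_r ∈ [4L] such that no previously-assigned pair on floor Z_r shares an x-coordinate with {X_r, X'_r} or a y-coordinate with {Y_r, Y'_r}. Then such a floor index always exists, i.e., the greedy algorithm never fails, and moreover for each floor Z ∈ [4L], any two distinct pairs assigned to floor Z have disjoint x-coordinate sets and disjoint y-coordinate sets. -/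
/-- Pair `r` is compatible with floor `z`: no earlier pair assigned to floor `z`
shares a column (x-coordinate) or a row (y-coordinate) with pair `r`. -/
def Compat {L k : ℕ} (a b : Fin k → Fin L × Fin L) (Z : Fin k → Fin (4 * L))
    (r : Fin k) (z : Fin (4 * L)) : Prop :=
  ∀ q : Fin k, q < r → Z q = z →
    (({(a r).1, (b r).1} : Set (Fin L)) ∩ {(a q).1, (b q).1} = ∅ ∧
     ({(a r).2, (b r).2} : Set (Fin L)) ∩ {(a q).2, (b q).2} = ∅)

/-!
Colour the pairs greedily, each with the least floor not taken by an earlier pair sharing a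
column or a row with it. The two points of a pair lie on two columns and two rows, each line
holds `L` points, and distinct pairs use distinct points, so fewer than `4 * L` other pairs
share a line with a given one; hence the least free floor is always below `4 * L`.
-/

theorem Nat.sInf_compl_le_ncard {s : Set ℕ} (hs : s.Finite) : sInf sᶜ ≤ s.ncard := by
  by_contra! h
  have hsub : (Finset.range (s.ncard + 1) : Set ℕ) ⊆ s := fun z hz => by
    by_contra hzs
    exact Nat.notMem_of_lt_sInf (lt_of_le_of_lt (Nat.lt_succ_iff.mp (Finset.mem_range.mp hz)) h) hzs
  have := Set.ncard_le_ncard hsub hs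
  simp at this

section GreedyColoring

variable {ι : Type*} [LinearOrder ι] [WellFoundedLT ι] (R : ι → ι → Prop)

noncomputable def greedyColoring : ι → ℕ :=
  wellFounded_lt.fix fun r c => sInf {z | ∀ q (hq : q < r), R r q → c q hq ≠ z}

theorem greedyColoring_eq (r : ι) :
    greedyColoring R r = sInf (greedyColoring R '' {q | q < r ∧ R r q})ᶜ := by
  rw [greedyColoring, WellFounded.fix_eq]
  congr 1
  ext z
  simp

variable {R}

theorem exists_of_lt_greedyColoring {r : ι} {z : ℕ} (hz : z < greedyColoring R r) :
    ∃ q < r, R r q ∧ greedyColoring R q = z := by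
  rw [greedyColoring_eq] at hz
  simpa using Nat.notMem_of_lt_sInf hz

variable [Finite ι]

theorem greedyColoring_ne_of_lt {q r : ι} (hqr : q < r) (hR : R r q) :
    greedyColoring R q ≠ greedyColoring R r := by
  have hmem := Nat.sInf_mem
    (Set.toFinite (greedyColoring R '' {q | q < r ∧ R r q})).infinite_compl.nonempty
  rw [← greedyColoring_eq] at hmem
  exact fun h => hmem ⟨q, ⟨hqr, hR⟩, h⟩

theorem greedyColoring_le_ncard (r : ι) :
    greedyColoring R r ≤ {q | q < r ∧ R r q}.ncard := by
  rw [greedyColoring_eq]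
  exact (Nat.sInf_compl_le_ncard (Set.toFinite _)).trans (Set.ncard_image_le (Set.toFinite _))

end GreedyColoring

section LineConflicts

variable {ι α β : Type*}

theorem ncard_setOf_pair_meets_le {V W : Type*} [Finite ι] [Finite V] {a b : ι → V}
    (hinj : Function.Injective (Sum.elim a b)) (f : V → W) (w : W) :
    {q | f (a q) = w ∨ f (b q) = w}.ncard ≤ {v | f v = w}.ncard := by
  have hsub : {q | f (a q) = w ∨ f (b q) = w} ⊆
      Sum.elim id id '' {i | f (Sum.elim a b i) = w} := by
    rintro q (hq | hq)
    exacts [⟨.inl q, hq, rfl⟩, ⟨.inr q, hq, rfl⟩]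
  calc _ ≤ (Sum.elim id id '' {i | f (Sum.elim a b i) = w}).ncard := Set.ncard_le_ncard hsub
    _ ≤ {i | f (Sum.elim a b i) = w}.ncard := Set.ncard_image_le
    _ ≤ _ := Set.ncard_le_ncard_of_injOn (Sum.elim a b) (fun _ hi => hi) hinj.injOn

theorem ncard_setOf_fst_eq (x : α) : {v : α × β | v.1 = x}.ncard = Nat.card β := by
  rw [← Set.ncard_range_of_injective (Prod.mk_right_injective x)]
  congr 1
  ext ⟨x', y⟩
  simp [eq_comm]

theorem ncard_setOf_snd_eq (y : β) : {v : α × β | v.2 = y}.ncard = Nat.card α := by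
  rw [← Set.ncard_range_of_injective (Prod.mk_left_injective y)]
  congr 1
  ext ⟨x, y'⟩
  simp [eq_comm]

variable (a b : ι → α × β)

def LineDisjoint (r q : ι) : Prop :=
  ({(a r).1, (b r).1} : Set α) ∩ {(a q).1, (b q).1} = ∅ ∧
  ({(a r).2, (b r).2} : Set β) ∩ {(a q).2, (b q).2} = ∅

theorem lineDisjoint_comm {r q : ι} : LineDisjoint a b r q ↔ LineDisjoint a b q r := by
  simp only [LineDisjoint, Set.inter_comm]

theorem ncard_not_lineDisjoint_lt [Finite ι] [Finite α] [Finite β]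
    (hinj : Function.Injective (Sum.elim a b)) (r : ι) :
    {q | q ≠ r ∧ ¬ LineDisjoint a b r q}.ncard < 2 * Nat.card β + 2 * Nat.card α := by
  set col : α → Set ι := fun x => {q | (a q).1 = x ∨ (b q).1 = x}
  set row : β → Set ι := fun y => {q | (a q).2 = y ∨ (b q).2 = y}
  have hsub : {q | q ≠ r ∧ ¬ LineDisjoint a b r q} ⊆
      (col (a r).1 ∪ col (b r).1 ∪ row (a r).2 ∪ row (b r).2) \ {r} := by
    rintro q ⟨hne, hq⟩
    refine ⟨?_, hne⟩
    contrapose! hq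
    simp only [col, row, Set.mem_union, Set.mem_ofPred_eq, not_or] at hq
    constructor <;> ext x <;>
      simp only [Set.mem_inter_iff, Set.mem_insert_iff, Set.mem_singleton_iff] <;> grind
  have hcol (x : α) : (col x).ncard ≤ Nat.card β :=
    (ncard_setOf_pair_meets_le hinj Prod.fst x).trans_eq (ncard_setOf_fst_eq x)
  have hrow (y : β) : (row y).ncard ≤ Nat.card α :=
    (ncard_setOf_pair_meets_le hinj Prod.snd y).trans_eq (ncard_setOf_snd_eq y)
  calc _ ≤ ((col (a r).1 ∪ col (b r).1 ∪ row (a r).2 ∪ row (b r).2) \ {r}).ncard :=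
        Set.ncard_le_ncard hsub
    _ < (col (a r).1 ∪ col (b r).1 ∪ row (a r).2 ∪ row (b r).2).ncard :=
        Set.ncard_sdiff_singleton_lt_of_mem (.inl (.inl (.inl (.inl rfl))))
    _ ≤ (col (a r).1).ncard + (col (b r).1).ncard + (row (a r).2).ncard + (row (b r).2).ncard :=
        by grw [Set.ncard_union_le, Set.ncard_union_le, Set.ncard_union_le]
    _ ≤ Nat.card β + Nat.card β + Nat.card α + Nat.card α := by
        grw [hcol, hcol, hrow, hrow]
    _ = _ := by ring

end LineConflicts

theorem stmt3_general (L k : ℕ)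
    (a b : Fin k → Fin L × Fin L)
    (hpair : IsPairing (Finset.univ : Finset (Fin L × Fin L)) a b) :
    ∃ Z : Fin k → Fin (4 * L),
      (∀ r : Fin k,
        Compat a b Z r (Z r) ∧ ∀ z : Fin (4 * L), z < Z r → ¬ Compat a b Z r z) ∧
      (∀ r s : Fin k, r ≠ s → Z r = Z s →
        (({(a r).1, (b r).1} : Set (Fin L)) ∩ {(a s).1, (b s).1} = ∅ ∧
         ({(a r).2, (b r).2} : Set (Fin L)) ∩ {(a s).2, (b s).2} = ∅)) := by
  set c := greedyColoring fun r q => ¬ LineDisjoint a b r q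
  have hc (r : Fin k) : c r < 4 * L := by
    calc c r ≤ {q | q < r ∧ ¬ LineDisjoint a b r q}.ncard := greedyColoring_le_ncard r
      _ ≤ {q | q ≠ r ∧ ¬ LineDisjoint a b r q}.ncard :=
          Set.ncard_le_ncard fun q hq => ⟨hq.1.ne, hq.2⟩
      _ < 4 * L := by
          simpa [← two_mul, ← mul_assoc] using ncard_not_lineDisjoint_lt a b hpair.1 r
  have hdisj {q r : Fin k} (hqr : q < r) (hcqr : c q = c r) : LineDisjoint a b r q :=
    not_not.mp fun h => greedyColoring_ne_of_lt hqr h hcqr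
  refine ⟨fun r => ⟨c r, hc r⟩, fun r => ⟨?_, ?_⟩, ?_⟩
  · exact fun q hqr hZ => hdisj hqr (congrArg Fin.val hZ)
  · intro z hz hcompat
    obtain ⟨q, hqr, hconflict, hcq⟩ := exists_of_lt_greedyColoring (Fin.lt_def.mp hz)
    exact hconflict (hcompat q hqr (Fin.ext hcq))
  · intro r s hrs hZ
    rcases hrs.lt_or_gt with hlt | hlt
    · exact (lineDisjoint_comm a b).mp (hdisj hlt (congrArg Fin.val hZ))
    · exact hdisj hlt (congrArg Fin.val hZ).symm

/-- the greedy floor-assignment algorithm never fails: there is an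
assignment `Z` of floors in `[4L]` to the pairs such that each pair gets the
smallest compatible floor, and any two distinct pairs assigned to the same floor
have disjoint x-coordinate sets and disjoint y-coordinate sets. -/
theorem stmt3 (L k : ℕ) (hL : 2 ≤ L) (hk : 2 * k = L ^ 2)
    (a b : Fin k → Fin L × Fin L)
    (hpair : IsPairing (Finset.univ : Finset (Fin L × Fin L)) a b) :
    ∃ Z : Fin k → Fin (4 * L),
      (∀ r : Fin k,
        Compat a b Z r (Z r) ∧ ∀ z : Fin (4 * L), z < Z r → ¬ Compat a b Z r z) ∧
      (∀ r s : Fin k, r ≠ s → Z r = Z s →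
        (({(a r).1, (b r).1} : Set (Fin L)) ∩ {(a s).1, (b s).1} = ∅ ∧
         ({(a r).2, (b r).2} : Set (Fin L)) ∩ {(a s).2, (b s).2} = ∅)) :=
  stmt3_general L k a b hpair
end

section
/- Let S and T be random subsets of [n] that are local stochastic sets of parameters p and q respectively (they may be arbitrarily dependent). Then the union S ∪ T is a local stochastic set of parameter 2·max{√p, √q}. -/
open MeasureTheory

private lemma sqrt_pow_aux (x : ℝ) (hx : 0 ≤ x) (k : ℕ) :
    Real.sqrt x ^ k = Real.sqrt (x ^ k) := by
  induction k with
  | zero => simp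
  | succ k ih => rw [pow_succ, pow_succ, ih, Real.sqrt_mul (pow_nonneg hx _)]

/-- A random subset `S` of `α` is a local stochastic set of parameter `p`. -/
def LocalStochastic {Ω α : Type*} [MeasurableSpace Ω]
    (μ : Measure Ω) (S : Ω → Finset α) (p : ℝ) : Prop :=
  ∀ F : Finset α, μ {ω | F ⊆ S ω} ≤ ENNReal.ofReal (p ^ F.card)

/-- if `S` and `T` are (possibly dependent) local stochastic sets of
parameters `p` and `q`, then `S ∪ T` is local stochastic of parameter
`2 · max{√p, √q}`. -/
theorem stmt6 {Ω : Type*} [MeasurableSpace Ω] (μ : Measure Ω) [IsProbabilityMeasure μ]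
    (n : ℕ) (p q : ℝ) (hp : 0 ≤ p) (hq : 0 ≤ q)
    (S T : Ω → Finset (Fin n))
    (hS : LocalStochastic μ S p) (hT : LocalStochastic μ T q) :
    LocalStochastic μ (fun ω => S ω ∪ T ω) (2 * max (Real.sqrt p) (Real.sqrt q)) := by
  intro F
  set r := max (Real.sqrt p) (Real.sqrt q) with hr
  have hr0 : 0 ≤ r := le_max_of_le_left (Real.sqrt_nonneg p)
  have hsub : {ω | F ⊆ S ω ∪ T ω} ⊆
      ⋃ A ∈ F.powerset, {ω | A ⊆ S ω ∧ F \ A ⊆ T ω} := by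
    intro ω hω
    simp only [Set.mem_iUnion]
    refine ⟨F ∩ S ω, Finset.mem_powerset.2 Finset.inter_subset_left,
      Finset.inter_subset_right, ?_⟩
    intro x hx
    rw [Finset.mem_sdiff] at hx
    rcases Finset.mem_union.1 (hω hx.1) with h | h
    · exact absurd (Finset.mem_inter.2 ⟨hx.1, h⟩) hx.2
    · exact h
  have key : ∀ A ∈ F.powerset, μ {ω | A ⊆ S ω ∧ F \ A ⊆ T ω} ≤
      ENNReal.ofReal (Real.sqrt p ^ A.card * Real.sqrt q ^ (F \ A).card) := by
    intro A _
    have h1 : μ {ω | A ⊆ S ω ∧ F \ A ⊆ T ω} ≤ ENNReal.ofReal (p ^ A.card) :=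
      le_trans (measure_mono fun ω h => h.1) (hS A)
    have h2 : μ {ω | A ⊆ S ω ∧ F \ A ⊆ T ω} ≤ ENNReal.ofReal (q ^ (F \ A).card) :=
      le_trans (measure_mono fun ω h => h.2) (hT (F \ A))
    have hsp : Real.sqrt p ^ A.card = Real.sqrt (p ^ A.card) :=
      sqrt_pow_aux p hp _
    have hsq : Real.sqrt q ^ (F \ A).card = Real.sqrt (q ^ (F \ A).card) :=
      sqrt_pow_aux q hq _
    rcases le_total (p ^ A.card) (q ^ (F \ A).card) with hle | hle
    · refine le_trans h1 (ENNReal.ofReal_le_ofReal ?_)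
      rw [hsp, hsq]
      calc p ^ A.card = Real.sqrt (p ^ A.card) * Real.sqrt (p ^ A.card) :=
            (Real.mul_self_sqrt (pow_nonneg hp _)).symm
        _ ≤ Real.sqrt (p ^ A.card) * Real.sqrt (q ^ (F \ A).card) :=
            mul_le_mul_of_nonneg_left (Real.sqrt_le_sqrt hle) (Real.sqrt_nonneg _)
    · refine le_trans h2 (ENNReal.ofReal_le_ofReal ?_)
      rw [hsp, hsq]
      calc q ^ (F \ A).card = Real.sqrt (q ^ (F \ A).card) * Real.sqrt (q ^ (F \ A).card) :=
            (Real.mul_self_sqrt (pow_nonneg hq _)).symm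
        _ ≤ Real.sqrt (p ^ A.card) * Real.sqrt (q ^ (F \ A).card) :=
            mul_le_mul_of_nonneg_right (Real.sqrt_le_sqrt hle) (Real.sqrt_nonneg _)
  have hsum : (∑ A ∈ F.powerset, Real.sqrt p ^ A.card * Real.sqrt q ^ (F \ A).card)
      = (Real.sqrt p + Real.sqrt q) ^ F.card := by
    have := Finset.prod_add (fun _ : Fin n => Real.sqrt p) (fun _ => Real.sqrt q) F
    simp only [Finset.prod_const] at this
    exact this.symm
  calc μ {ω | F ⊆ S ω ∪ T ω}
      ≤ μ (⋃ A ∈ F.powerset, {ω | A ⊆ S ω ∧ F \ A ⊆ T ω}) := measure_mono hsub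
    _ ≤ ∑ A ∈ F.powerset, μ {ω | A ⊆ S ω ∧ F \ A ⊆ T ω} :=
        measure_biUnion_finset_le _ _
    _ ≤ ∑ A ∈ F.powerset,
          ENNReal.ofReal (Real.sqrt p ^ A.card * Real.sqrt q ^ (F \ A).card) :=
        Finset.sum_le_sum key
    _ = ENNReal.ofReal (∑ A ∈ F.powerset,
          Real.sqrt p ^ A.card * Real.sqrt q ^ (F \ A).card) := by
        rw [ENNReal.ofReal_sum_of_nonneg]
        intro A _
        exact mul_nonneg (pow_nonneg (Real.sqrt_nonneg _) _)
          (pow_nonneg (Real.sqrt_nonneg _) _)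
    _ ≤ ENNReal.ofReal ((2 * r) ^ F.card) := by
        apply ENNReal.ofReal_le_ofReal
        rw [hsum]
        apply pow_le_pow_left₀ (by positivity)
        have : Real.sqrt p + Real.sqrt q ≤ r + r :=
          add_le_add (le_max_left _ _) (le_max_right _ _)
        linarith
end

section
/- Let k ∈ ℕ and for each j ∈ [k] let S_j be a random subset of a finite set A_j, where the sets A_1,...,A_k are pairwise disjoint with union A. Suppose the joint random set S = S_1 ∪ ... ∪ S_k is a local stochastic set of parameter p on A. For each j, let FAIL_j be an event determined by S_j, and suppose there are families {D^{(j)}_m}_{m ∈ M_j} of subsets of A_j such that: (a) FAIL_j implies D^{(j)}_m ⊆ S_j for some m ∈ M_j, and (b) Σ_{m ∈ M_j} p^{|D^{(j)}_m|} ≤ f_j(p) for all p ≤ p_0. Then for any ℓ ≤ k and any distinct indices j_1,...,j_ℓ, Pr[FAIL_{j_1} ∧ ... ∧ FAIL_{j_ℓ}] ≤ Π_{i=1}^ℓ f_{j_i}(p) for all p ≤ min_j p_0^{(j)}. -/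
open MeasureTheory

/-- parallel repetition bound for failure events.  The qubits are
partitioned into pairwise disjoint regions `A j`; the joint random error-support
`S` is local stochastic of parameter `p`; each failure event `FAIL j` implies that
some set `D ∈ M j` (with `D ⊆ A j`) is contained in `S`; and
`Σ_{D ∈ M j} q^|D| ≤ f j q` for `q ≤ p0 j`.  Then for any distinct indices
`j₁,…,j_ℓ`, `Pr[FAIL j₁ ∧ ⋯ ∧ FAIL j_ℓ] ≤ ∏ f (jᵢ) p` whenever `p ≤ min_j p0 j`. -/
theorem stmt10 {Ω : Type*} [MeasurableSpace Ω] (μ : Measure Ω) [IsProbabilityMeasure μ]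
    (n k : ℕ) (A : Fin k → Finset (Fin n))
    (hdisj : ∀ i j : Fin k, i ≠ j → Disjoint (A i) (A j))
    (S : Ω → Finset (Fin n)) (p : ℝ) (hp0 : 0 ≤ p)
    (hS : LocalStochastic μ S p)
    (FAIL : Fin k → Set Ω)
    (M : Fin k → Finset (Finset (Fin n)))
    (hMsub : ∀ j, ∀ D ∈ M j, D ⊆ A j)
    (hcover : ∀ j, ∀ ω ∈ FAIL j, ∃ D ∈ M j, D ⊆ S ω)
    (p0 : Fin k → ℝ) (f : Fin k → ℝ → ℝ)
    (hf : ∀ j, ∀ q : ℝ, 0 ≤ q → q ≤ p0 j → ∑ D ∈ M j, q ^ D.card ≤ f j q)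
    (hp : ∀ j, p ≤ p0 j)
    (ℓ : ℕ) (js : Fin ℓ → Fin k) (hjs : Function.Injective js) :
    μ (⋂ i, FAIL (js i)) ≤ ENNReal.ofReal (∏ i, f (js i) p) := by
  classical
  set T : Finset (Fin ℓ → Finset (Fin n)) := Fintype.piFinset (fun i => M (js i)) with hT
  -- covering by the union of events
  have hsub : (⋂ i, FAIL (js i)) ⊆ ⋃ g ∈ T, {ω | Finset.univ.biUnion g ⊆ S ω} := by
    intro ω hω
    have hω' : ∀ i, ω ∈ FAIL (js i) := by simpa [Set.mem_iInter] using hω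
    choose D hD hDS using fun i => hcover (js i) ω (hω' i)
    have hDT : D ∈ T := by simp [hT, Fintype.mem_piFinset, hD]
    refine Set.mem_biUnion hDT ?_
    intro x hx
    rcases Finset.mem_biUnion.mp hx with ⟨i, _, hxi⟩
    exact hDS i hxi
  calc μ (⋂ i, FAIL (js i)) ≤ μ (⋃ g ∈ T, {ω | Finset.univ.biUnion g ⊆ S ω}) :=
        measure_mono hsub
    _ ≤ ∑ g ∈ T, μ {ω | Finset.univ.biUnion g ⊆ S ω} := measure_biUnion_finset_le T _
    _ ≤ ∑ g ∈ T, ENNReal.ofReal (∏ i, p ^ (g i).card) := by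
        refine Finset.sum_le_sum fun g hg => ?_
        have hgmem : ∀ i, g i ∈ M (js i) := by
          simpa [hT, Fintype.mem_piFinset] using hg
        have hcard : (Finset.univ.biUnion g).card = ∑ i, (g i).card := by
          refine Finset.card_biUnion ?_
          intro i _ i' _ hii'
          exact (hdisj (js i) (js i') (fun h => hii' (hjs h))).mono
            (hMsub _ _ (hgmem i)) (hMsub _ _ (hgmem i'))
        have := hS (Finset.univ.biUnion g)
        rwa [hcard, ← Finset.prod_pow_eq_pow_sum] at this
    _ = ENNReal.ofReal (∑ g ∈ T, ∏ i, p ^ (g i).card) := by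
        rw [ENNReal.ofReal_sum_of_nonneg]
        intro g _
        exact Finset.prod_nonneg fun i _ => pow_nonneg hp0 _
    _ ≤ ENNReal.ofReal (∏ i, f (js i) p) := by
        apply ENNReal.ofReal_le_ofReal
        have heq := Finset.prod_univ_sum (t := fun i => M (js i))
          (f := fun i D => p ^ D.card)
        rw [hT, ← heq]
        refine Finset.prod_le_prod (fun i _ => ?_) (fun i _ => ?_)
        · exact Finset.sum_nonneg fun D _ => pow_nonneg hp0 _
        · exact hf (js i) p hp0 (hp (js i))
end

section
/- Parallel repetition of robust state-preparation circuits: let π^{(1)},...,π^{(k)} be circuits acting on disjoint qubit sets, where π^{(j)} acts on N^{(j)} qubits, outputs r^{(j)} qubits, and is (p_0^{(j)}, f^{(j)})-robust. Let r = max_j r^{(j)}, p_0 = min_j p_0^{(j)}, and let E be local stochastic noise of strength p ≤ p_0 on all N = Σ_j N^{(j)} qubits. Then the effective error E_eff on the Σ_j r^{(j)} output qubits (which equals the tensor product of the individual effective errors E_eff^{(j)}(E^{(j)})) is local stochastic of strength (max_j f^{(j)}(p))^{1/r}. In particular, if f^{(j)}(p) ≤ C p^c for all j and p ≤ p_0,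 then E_eff is local stochastic of strength C^{1/r} p^{c/r}. -/
/-!
A set `F` of faulty outputs meeting the circuits `J` requires, for every `j ∈ J`, some
`D ∈ M j` inside the input error. These witnesses live in the disjoint regions `A j`, so a union
bound over one choice of `D` per circuit bounds the probability by
`∏ j ∈ J, ∑ D ∈ M j, p ^ |D| ≤ (max_j f j p) ^ |J|`. Since `F` has at most `r |J|` elements
and the bound only matters when `max_j f j p < 1`, this is at most
`((max_j f j p) ^ (1 / r)) ^ |F|`.
-/

open MeasureTheory

open Finset

theorem pow_le_rpow_one_div_pow {B : ℝ} (hB : 0 ≤ B) {R t m : ℕ} (hR : R ≠ 0)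
    (h1 : B ^ ((1 : ℝ) / R) ≤ 1) (hm : m ≤ R * t) : B ^ t ≤ (B ^ ((1 : ℝ) / R)) ^ m :=
  calc B ^ t = (B ^ ((1 : ℝ) / R)) ^ (R * t) := by
        rw [pow_mul, ← Real.rpow_natCast _ R, ← Real.rpow_mul hB,
          one_div_mul_cancel (by exact_mod_cast hR), Real.rpow_one]
    _ ≤ (B ^ ((1 : ℝ) / R)) ^ m := pow_le_pow_of_le_one (by positivity) h1 hm

theorem rpow_one_div_le_mul_rpow_div {G C p c : ℝ} (hG : 0 ≤ G) (hp : 0 ≤ p)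
    (h : G ≤ C * p ^ c) (R : ℕ) : G ^ ((1 : ℝ) / R) ≤ C ^ ((1 : ℝ) / R) * p ^ (c / R) := by
  rcases le_or_gt 0 C with hC | hC
  · calc G ^ ((1 : ℝ) / R) ≤ (C * p ^ c) ^ ((1 : ℝ) / R) :=
          Real.rpow_le_rpow hG h (by positivity)
      _ = C ^ ((1 : ℝ) / R) * p ^ (c / R) := by
          rw [Real.mul_rpow hC (Real.rpow_nonneg hp c), ← Real.rpow_mul hp, mul_one_div]
  · have hpc : p ^ c = 0 := by nlinarith [Real.rpow_nonneg hp c]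
    obtain ⟨rfl, hc⟩ := (Real.rpow_eq_zero_iff_of_nonneg hp).1 hpc
    obtain rfl : G = 0 := by linarith [mul_zero C ▸ hpc ▸ h]
    rcases eq_or_ne R 0 with rfl | hR
    · simp
    · simp [Real.zero_rpow, hc, hR]

theorem Finset.card_le_card_image_fst_mul {ι : Type*} [DecidableEq ι] {β : ι → Type*}
    [∀ i, Fintype (β i)] (F : Finset (Σ i, β i)) {R : ℕ} (hβ : ∀ i, Fintype.card (β i) ≤ R) :
    F.card ≤ R * (F.image Sigma.fst).card := by
  refine card_le_mul_card_image F R fun i _ => ?_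
  calc #{o ∈ F | o.1 = i} ≤ #((univ : Finset (β i)).map (Function.Embedding.sigmaMk i)) :=
        card_le_card fun o ho => by
          obtain ⟨-, rfl⟩ := mem_filter.1 ho
          simp
    _ ≤ R := by simpa using hβ i

section LocalStochastic

variable {Ω α : Type*} [MeasurableSpace Ω] {μ : Measure Ω}

theorem LocalStochastic.mono {S : Ω → Finset α} {a b : ℝ} (hS : LocalStochastic μ S a)
    (ha : 0 ≤ a) (hab : a ≤ b) : LocalStochastic μ S b :=
  fun F => (hS F).trans (ENNReal.ofReal_le_ofReal (pow_le_pow_left₀ ha hab _))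

theorem LocalStochastic.measure_forall_exists_subset_le {ι : Type*} [Fintype ι]
    {S : Ω → Finset α} {p : ℝ} (hS : LocalStochastic μ S p) (hp : 0 ≤ p)
    (M : ι → Finset (Finset α))
    (hM : Pairwise fun i j => ∀ D ∈ M i, ∀ D' ∈ M j, Disjoint D D') :
    μ {ω | ∀ i, ∃ D ∈ M i, D ⊆ S ω} ≤ ENNReal.ofReal (∏ i, ∑ D ∈ M i, p ^ D.card) := by
  classical
  have hcover : {ω | ∀ i, ∃ D ∈ M i, D ⊆ S ω} ⊆
      ⋃ g ∈ Fintype.piFinset M, {ω | univ.biUnion g ⊆ S ω} := by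
    intro ω hω
    choose g hgM hgS using hω
    exact Set.mem_biUnion (Fintype.mem_piFinset.2 hgM) (biUnion_subset.2 fun i _ => hgS i)
  have hcard : ∀ g ∈ Fintype.piFinset M, (univ.biUnion g).card = ∑ i, (g i).card :=
    fun g hg => card_biUnion fun i _ j _ hij =>
      hM hij _ (Fintype.mem_piFinset.1 hg i) _ (Fintype.mem_piFinset.1 hg j)
  calc μ {ω | ∀ i, ∃ D ∈ M i, D ⊆ S ω}
      ≤ ∑ g ∈ Fintype.piFinset M, μ {ω | univ.biUnion g ⊆ S ω} :=
        (measure_mono hcover).trans (measure_biUnion_finset_le _ _)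
    _ ≤ ∑ g ∈ Fintype.piFinset M, ENNReal.ofReal (p ^ (univ.biUnion g).card) :=
        sum_le_sum fun g _ => hS _
    _ = ENNReal.ofReal (∑ g ∈ Fintype.piFinset M, ∏ i, p ^ (g i).card) := by
        rw [← ENNReal.ofReal_sum_of_nonneg fun g _ => by positivity]
        refine congrArg _ (sum_congr rfl fun g hg => ?_)
        rw [hcard g hg, prod_pow_eq_pow_sum]
    _ = ENNReal.ofReal (∏ i, ∑ D ∈ M i, p ^ D.card) := by
        rw [prod_univ_sum]

theorem LocalStochastic.of_measure_le_pow_card_image_fst [IsProbabilityMeasure μ]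
    {ι : Type*} {β : ι → Type*} [∀ i, Fintype (β i)] [DecidableEq ι] {R : ℕ}
    (hβ : ∀ i, Fintype.card (β i) ≤ R) {T : Ω → Finset (Σ i, β i)} {G : ℝ} (hG : 0 ≤ G)
    (hT : ∀ F, μ {ω | F ⊆ T ω} ≤ ENNReal.ofReal (G ^ (F.image Sigma.fst).card)) :
    LocalStochastic μ T (G ^ ((1 : ℝ) / R)) := by
  intro F
  by_cases h1 : 1 ≤ G ^ ((1 : ℝ) / R)
  · exact prob_le_one.trans (ENNReal.one_le_ofReal.2 (one_le_pow₀ h1))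
  · have hR : R ≠ 0 := by rintro rfl; simp at h1
    exact (hT F).trans (ENNReal.ofReal_le_ofReal (pow_le_rpow_one_div_pow hG hR
      (le_of_not_ge h1) (F.card_le_card_image_fst_mul hβ)))

theorem LocalStochastic.measure_subset_effError_le {ι : Type*} [Fintype ι] [DecidableEq ι]
    {β : ι → Type*} [∀ i, Fintype (β i)] [∀ i, DecidableEq (β i)]
    {S : Ω → Finset α} {p G : ℝ} (hS : LocalStochastic μ S p) (hp : 0 ≤ p)
    (Eeff : (i : ι) → Finset α → Finset (β i)) (M : ι → Finset (Finset α))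
    (hM : Pairwise fun i j => ∀ D ∈ M i, ∀ D' ∈ M j, Disjoint D D')
    (hrobust : ∀ i E, (Eeff i E).Nonempty → ∃ D ∈ M i, D ⊆ E)
    (hG : ∀ i, ∑ D ∈ M i, p ^ D.card ≤ G) (F : Finset (Σ i, β i)) :
    μ {ω | F ⊆ univ.filter fun o : Σ i, β i => o.2 ∈ Eeff o.1 (S ω)} ≤
      ENNReal.ofReal (G ^ (F.image Sigma.fst).card) := by
  set J := F.image Sigma.fst
  have hfail : {ω | F ⊆ univ.filter fun o : Σ i, β i => o.2 ∈ Eeff o.1 (S ω)} ⊆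
      {ω | ∀ j : J, ∃ D ∈ M j, D ⊆ S ω} := by
    rintro ω hω ⟨j, hj⟩
    obtain ⟨o, hoF, rfl⟩ := mem_image.1 hj
    exact hrobust o.1 (S ω) ⟨o.2, (mem_filter.1 (hω hoF)).2⟩
  calc μ {ω | F ⊆ univ.filter fun o : Σ i, β i => o.2 ∈ Eeff o.1 (S ω)}
      ≤ ENNReal.ofReal (∏ j : J, ∑ D ∈ M j, p ^ D.card) :=
        (measure_mono hfail).trans (hS.measure_forall_exists_subset_le hp _
          (hM.comp_of_injective Subtype.val_injective))
    _ ≤ ENNReal.ofReal (G ^ J.card) := by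
        refine ENNReal.ofReal_le_ofReal ?_
        simpa using prod_le_prod (s := univ) (fun j _ => sum_nonneg fun D _ => pow_nonneg hp _)
          (fun (j : J) _ => hG j)

end LocalStochastic

theorem stmt11_general {Ω : Type*} [MeasurableSpace Ω] (μ : Measure Ω) [IsProbabilityMeasure μ]
    (n k : ℕ) (hk : 0 < k)
    (A : Fin k → Finset (Fin n))
    (hdisj : ∀ i j : Fin k, i ≠ j → Disjoint (A i) (A j))
    (r : Fin k → ℕ)
    (Eeff : (j : Fin k) → Finset (Fin n) → Finset (Fin (r j)))
    (p0 : Fin k → ℝ) (f : Fin k → ℝ → ℝ)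
    (M : Fin k → Finset (Finset (Fin n)))
    (hMsub : ∀ j, ∀ D ∈ M j, D ⊆ A j)
    (hrobust : ∀ j (E : Finset (Fin n)), (Eeff j E).Nonempty → ∃ D ∈ M j, D ⊆ E)
    (hf : ∀ j (q : ℝ), 0 ≤ q → q ≤ p0 j → ∑ D ∈ M j, q ^ D.card ≤ f j q)
    (S : Ω → Finset (Fin n)) (p : ℝ) (hp0 : 0 ≤ p)
    (hp : ∀ j, p ≤ p0 j)
    (hS : LocalStochastic μ S p)
    (C c : ℝ) :
    LocalStochastic μ
      (fun ω => Finset.univ.filter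
        (fun o : (j : Fin k) × Fin (r j) => o.2 ∈ Eeff o.1 (S ω)))
      ((Finset.univ.sup' ⟨⟨0, hk⟩, Finset.mem_univ _⟩ (fun j => f j p)) ^
        ((1 : ℝ) / ((Finset.univ.sup r : ℕ) : ℝ))) ∧
    ((∀ j (q : ℝ), 0 ≤ q → q ≤ p0 j → f j q ≤ C * q ^ c) →
      LocalStochastic μ
        (fun ω => Finset.univ.filter
          (fun o : (j : Fin k) × Fin (r j) => o.2 ∈ Eeff o.1 (S ω)))
        (C ^ ((1 : ℝ) / ((Finset.univ.sup r : ℕ) : ℝ)) *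
          p ^ (c / ((Finset.univ.sup r : ℕ) : ℝ)))) := by
  set G := univ.sup' ⟨⟨0, hk⟩, mem_univ _⟩ fun j => f j p
  have hG : ∀ j, ∑ D ∈ M j, p ^ D.card ≤ G :=
    fun j => (hf j p hp0 (hp j)).trans (le_sup' (fun j => f j p) (mem_univ j))
  have hG0 : 0 ≤ G := (sum_nonneg fun D _ => pow_nonneg hp0 _).trans (hG ⟨0, hk⟩)
  have hM : Pairwise fun i j => ∀ D ∈ M i, ∀ D' ∈ M j, Disjoint D D' :=
    fun i j hij D hD D' hD' => (hdisj i j hij).mono (hMsub i D hD) (hMsub j D' hD')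
  have hmain := LocalStochastic.of_measure_le_pow_card_image_fst
    (fun j => (Fintype.card_fin (r j)).trans_le (le_sup (mem_univ j))) hG0
    (hS.measure_subset_effError_le hp0 Eeff M hM hrobust hG)
  refine ⟨hmain, fun hC => hmain.mono (by positivity) ?_⟩
  exact rpow_one_div_le_mul_rpow_div hG0 hp0 (sup'_le _ _ fun j _ => hC j p hp0 (hp j)) _

/-- parallel repetition of robust state-preparation circuits.
Circuit `j` acts on the region `A j` of the `n` input qubits (regions pairwise
disjoint), outputs `r j` qubits and has effective-error map `Eeff j`, determined
by the error restricted to `A j`.  Robustness of circuit `j` is witnessed by a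
family `M j` of subsets of `A j` with `Σ_{D ∈ M j} q^{|D|} ≤ f j q` for
`q ≤ p0 j`.  Under joint local stochastic noise of strength `p ≤ min_j p0 j`,
the total effective error on the output qubits is local stochastic of strength
`(max_j f j p)^{1/r}` with `r = max_j r j`; in particular of strength
`C^{1/r}·p^{c/r}` whenever `f j q ≤ C·q^c` for all `j` and `q ≤ p0 j`. -/
theorem stmt11 {Ω : Type*} [MeasurableSpace Ω] (μ : Measure Ω) [IsProbabilityMeasure μ]
    (n k : ℕ) (hk : 0 < k)
    (A : Fin k → Finset (Fin n))
    (hdisj : ∀ i j : Fin k, i ≠ j → Disjoint (A i) (A j))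
    (r : Fin k → ℕ) (hr : ∀ j, 0 < r j)
    (Eeff : (j : Fin k) → Finset (Fin n) → Finset (Fin (r j)))
    (hdet : ∀ j E, Eeff j E = Eeff j (E ∩ A j))
    (p0 : Fin k → ℝ) (f : Fin k → ℝ → ℝ)
    (M : Fin k → Finset (Finset (Fin n)))
    (hMsub : ∀ j, ∀ D ∈ M j, D ⊆ A j)
    (hrobust : ∀ j (E : Finset (Fin n)), (Eeff j E).Nonempty → ∃ D ∈ M j, D ⊆ E)
    (hf : ∀ j (q : ℝ), 0 ≤ q → q ≤ p0 j → ∑ D ∈ M j, q ^ D.card ≤ f j q)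
    (S : Ω → Finset (Fin n)) (p : ℝ) (hp0 : 0 ≤ p)
    (hp : ∀ j, p ≤ p0 j)
    (hS : LocalStochastic μ S p)
    (C c : ℝ) :
    LocalStochastic μ
      (fun ω => Finset.univ.filter
        (fun o : (j : Fin k) × Fin (r j) => o.2 ∈ Eeff o.1 (S ω)))
      ((Finset.univ.sup' ⟨⟨0, hk⟩, Finset.mem_univ _⟩ (fun j => f j p)) ^
        ((1 : ℝ) / ((Finset.univ.sup r : ℕ) : ℝ))) ∧
    ((∀ j (q : ℝ), 0 ≤ q → q ≤ p0 j → f j q ≤ C * q ^ c) →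
      LocalStochastic μ
        (fun ω => Finset.univ.filter
          (fun o : (j : Fin k) × Fin (r j) => o.2 ∈ Eeff o.1 (S ω)))
        (C ^ ((1 : ℝ) / ((Finset.univ.sup r : ℕ) : ℝ)) *
          p ^ (c / ((Finset.univ.sup r : ℕ) : ℝ)))) :=
  stmt11_general μ n k hk A hdisj r Eeff p0 f M hMsub hrobust hf S p hp0 hp hS C c
end

section
/- Let w ∈ ℕ, n₁, n₂ ∈ ℕ with n₁·w ≤ n₂, and let A ∈ F₂^{n₁×n₂} be a matrix whose non-zero row vectors all have Hamming weight exactly w and whose column vectors all have Hamming weight at most 1. Let e ∈ F₂^{n₂} be a random vector such that its support is a local stochastic set of parameter p. Then the support of Ae ∈ F₂^{n₁} is a local stochastic set of parameter 4·p^{1/w}. More precisely, one can write Ae = g^{(1)} + ... + g^{(w)} where each g^{(k)} has support that is a local stochastic set of parameter p, and the support of the sum is a local stochastic set of parameter 4·p^{2^{−⌈log₂ w⌉}} ≤ 4·p^{1/w}. -/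
/-!
If `(Ae)ᵢ ≠ 0` then some `j` in the support of row `i` has `eⱼ ≠ 0`. Since every column has
weight at most one, the row supports are pairwise disjoint, so for a set `F` of rows the
witnesses of distinct rows are distinct: a union bound over the at most `w ^ |F|` choices of
witnesses shows that the support of `Ae` is local stochastic of parameter `w p`. Finally
`w p ≤ 4 p ^ β` whenever `β w ≤ 1` and `4 p ^ β < 1`, and a parameter `≥ 1` is trivial.
-/

open MeasureTheory Finset Function

lemma natCast_mul_pow_le_four_mul {x : ℝ} (hx0 : 0 ≤ x) (hx : x ≤ 1 / 4) (w : ℕ) :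
    (w : ℝ) * x ^ w ≤ 4 * x := by
  cases w with
  | zero => simpa using hx0
  | succ k =>
    have hk : ((k + 1 : ℕ) : ℝ) ≤ 4 ^ (k + 1) := by
      exact_mod_cast (Nat.lt_pow_self (by norm_num : 1 < 4)).le
    have hxk : x ^ k ≤ (1 / 4) ^ k := pow_le_pow_left₀ hx0 hx k
    have hcoef : ((k + 1 : ℕ) : ℝ) * x ^ k ≤ 4 :=
      calc ((k + 1 : ℕ) : ℝ) * x ^ k ≤ 4 ^ (k + 1) * (1 / 4) ^ k := by gcongr
        _ = 4 := by rw [pow_succ, mul_right_comm, ← mul_pow]; norm_num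
    calc ((k + 1 : ℕ) : ℝ) * x ^ (k + 1) = (((k + 1 : ℕ) : ℝ) * x ^ k) * x := by ring
      _ ≤ 4 * x := mul_le_mul_of_nonneg_right hcoef hx0

lemma natCast_mul_le_four_mul_rpow {p β : ℝ} {w : ℕ} (hp : 0 ≤ p) (hβ : 0 ≤ β)
    (hβw : β * w ≤ 1) (hsmall : 4 * p ^ β < 1) :
    (w : ℝ) * p ≤ 4 * p ^ β := by
  have hp1 : p ≤ 1 := by
    by_contra! h
    linarith [Real.one_le_rpow h.le hβ]
  have hp_le : p ≤ (p ^ β) ^ w :=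
    calc p = p ^ (1 : ℝ) := (Real.rpow_one p).symm
      _ ≤ p ^ (β * w) := Real.rpow_le_rpow_of_exponent_ge' hp hp1 (by positivity) hβw
      _ = (p ^ β) ^ w := by rw [Real.rpow_mul hp, Real.rpow_natCast]
  calc (w : ℝ) * p ≤ w * (p ^ β) ^ w := by gcongr
    _ ≤ 4 * p ^ β :=
      natCast_mul_pow_le_four_mul (Real.rpow_nonneg hp β) (by linarith) w

namespace LocalStochastic

variable {Ω ι κ : Type*} [MeasurableSpace Ω] {μ : Measure Ω}

lemma mono_s14 {S : Ω → Finset ι} {p q : ℝ} (hS : LocalStochastic μ S p) (hp : 0 ≤ p)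
    (hpq : p ≤ q) : LocalStochastic μ S q := fun F =>
  (hS F).trans (ENNReal.ofReal_le_ofReal (pow_le_pow_left₀ hp hpq _))

lemma of_one_le [IsProbabilityMeasure μ] (S : Ω → Finset ι) {q : ℝ} (hq : 1 ≤ q) :
    LocalStochastic μ S q := fun F =>
  calc μ {ω | F ⊆ S ω} ≤ 1 := prob_le_one
    _ ≤ ENNReal.ofReal (q ^ F.card) := by
      rw [← ENNReal.ofReal_one]
      exact ENNReal.ofReal_le_ofReal (one_le_pow₀ hq)

lemma four_mul_rpow [IsProbabilityMeasure μ] {S : Ω → Finset ι} {p β : ℝ} {w : ℕ}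
    (hS : LocalStochastic μ S (w * p)) (hp : 0 ≤ p) (hβ : 0 ≤ β) (hβw : β * w ≤ 1) :
    LocalStochastic μ S (4 * p ^ β) := by
  rcases le_or_gt 1 (4 * p ^ β) with hbig | hsmall
  · exact of_one_le S hbig
  · exact hS.mono_s14 (by positivity) (natCast_mul_le_four_mul_rpow hp hβ hβw hsmall)

lemma of_disjoint_witnesses {S : Ω → Finset κ} {T : Ω → Finset ι} {p : ℝ}
    (hS : LocalStochastic μ S p) (N : ι → Finset κ) {w : ℕ}
    (hN : ∀ i, (N i).card ≤ w) (hdisj : Pairwise (Disjoint on N))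
    (hT : ∀ ω, ∀ i ∈ T ω, ∃ j ∈ N i, j ∈ S ω) :
    LocalStochastic μ T (w * p) := by
  classical
  intro F
  let witnesses (f : ∀ i ∈ F, κ) : Finset κ := F.attach.image fun i => f i.1 i.2
  have cover : {ω | F ⊆ T ω} ⊆ ⋃ f ∈ F.pi N, {ω | witnesses f ⊆ S ω} := by
    intro ω hω
    choose f hfN hfS using fun i (hi : i ∈ F) => hT ω i (hω hi)
    refine Set.mem_iUnion₂.2 ⟨f, mem_pi.2 hfN, ?_⟩
    simp only [witnesses, Set.mem_ofPred_eq, image_subset_iff]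
    exact fun i _ => hfS i.1 i.2
  have card_witnesses : ∀ f ∈ F.pi N, (witnesses f).card = F.card := by
    intro f hf
    rw [card_image_of_injective _ fun i i' hii' => ?_, card_attach]
    by_contra hne
    exact disjoint_left.1 (hdisj (Subtype.coe_injective.ne hne))
      (mem_pi.1 hf i.1 i.2) (hii' ▸ mem_pi.1 hf i'.1 i'.2)
  have card_pi_le : (F.pi N).card ≤ w ^ F.card := by
    rw [card_pi]
    exact prod_le_pow_card _ _ _ fun i _ => hN i
  calc μ {ω | F ⊆ T ω} ≤ ∑ f ∈ F.pi N, μ {ω | witnesses f ⊆ S ω} :=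
        (measure_mono cover).trans (measure_biUnion_finset_le _ _)
    _ ≤ ∑ _f ∈ F.pi N, ENNReal.ofReal (p ^ F.card) :=
        sum_le_sum fun f hf => card_witnesses f hf ▸ hS (witnesses f)
    _ ≤ (w ^ F.card : ℕ) * ENNReal.ofReal (p ^ F.card) := by
        rw [sum_const, nsmul_eq_mul]
        gcongr
    _ = ENNReal.ofReal ((w * p) ^ F.card) := by
        rw [← ENNReal.ofReal_natCast, ← ENNReal.ofReal_mul (by positivity), mul_pow]
        push_cast
        rfl

end LocalStochastic

namespace Matrix

variable {m n R : Type*} [Fintype n]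

lemma exists_ne_zero_of_mulVec_ne_zero [NonUnitalNonAssocSemiring R] {A : Matrix m n R}
    {v : n → R} {i : m} (h : A.mulVec v i ≠ 0) : ∃ j, A i j ≠ 0 ∧ v j ≠ 0 := by
  obtain ⟨j, -, hj⟩ := exists_ne_zero_of_sum_ne_zero h
  exact ⟨j, left_ne_zero_of_mul hj, right_ne_zero_of_mul hj⟩

variable [Zero R] [DecidableEq R] {A : Matrix m n R}

lemma card_filter_row_ne_zero_le {w : ℕ}
    (hrow : ∀ i, (∃ j, A i j ≠ 0) → (univ.filter fun j => A i j ≠ 0).card = w) (i : m) :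
    (univ.filter fun j => A i j ≠ 0).card ≤ w := by
  by_cases hi : ∃ j, A i j ≠ 0
  · exact (hrow i hi).le
  · push Not at hi
    simp [hi]

lemma pairwise_disjoint_filter_row_ne_zero [Fintype m]
    (hcol : ∀ j, (univ.filter fun i => A i j ≠ 0).card ≤ 1) :
    Pairwise (Disjoint on fun i => univ.filter fun j => A i j ≠ 0) := by
  intro i i' hii'
  refine disjoint_left.2 fun j hi hi' => hii' ?_
  exact card_le_one.1 (hcol j) i (by simpa using hi) i' (by simpa using hi')

end Matrix

theorem stmt14_general {Ω : Type*} [MeasurableSpace Ω] (μ : Measure Ω) [IsProbabilityMeasure μ]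
    (n₁ n₂ w : ℕ)
    (A : Matrix (Fin n₁) (Fin n₂) (ZMod 2))
    (hrow : ∀ i : Fin n₁, (∃ j, A i j ≠ 0) →
      (Finset.univ.filter (fun j => A i j ≠ 0)).card = w)
    (hcol : ∀ j : Fin n₂, (Finset.univ.filter (fun i => A i j ≠ 0)).card ≤ 1)
    (e : Ω → Fin n₂ → ZMod 2) (p : ℝ) (hp0 : 0 ≤ p)
    (he : LocalStochastic μ (fun ω => Finset.univ.filter (fun j => e ω j ≠ 0)) p) :
    LocalStochastic μ
      (fun ω => Finset.univ.filter (fun i => A.mulVec (e ω) i ≠ 0))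
      (4 * p ^ ((2 : ℝ) ^ (-(Nat.clog 2 w : ℝ)))) ∧
    LocalStochastic μ
      (fun ω => Finset.univ.filter (fun i => A.mulVec (e ω) i ≠ 0))
      (4 * p ^ ((1 : ℝ) / (w : ℝ))) := by
  have key : LocalStochastic μ (fun ω => univ.filter fun i => A.mulVec (e ω) i ≠ 0) (w * p) :=
    LocalStochastic.of_disjoint_witnesses he _ (Matrix.card_filter_row_ne_zero_le hrow)
      (Matrix.pairwise_disjoint_filter_row_ne_zero hcol) fun ω i hi => by
        obtain ⟨j, hAj, hej⟩ := Matrix.exists_ne_zero_of_mulVec_ne_zero (mem_filter.1 hi).2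
        exact ⟨j, by simpa using hAj, by simpa using hej⟩
  refine ⟨key.four_mul_rpow hp0 (by positivity) ?_, key.four_mul_rpow hp0 (by positivity) ?_⟩
  · rw [Real.rpow_neg zero_le_two, Real.rpow_natCast, inv_mul_le_one₀ (by positivity)]
    exact_mod_cast Nat.le_pow_clog one_lt_two w
  · rcases w.eq_zero_or_pos with rfl | hw
    · simp
    · rw [one_div_mul_cancel (Nat.cast_ne_zero.2 hw.ne')]

/-- let `A ∈ F₂^{n₁×n₂}` with `n₁·w ≤ n₂`, all non-zero rows of
Hamming weight exactly `w` and all columns of Hamming weight at most `1`.  If the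
support of the random vector `e ∈ F₂^{n₂}` is local stochastic of parameter `p`,
then the support of `Ae` is local stochastic of parameter
`4·p^{2^{−⌈log₂ w⌉}}`, and of parameter `4·p^{1/w}`. -/
theorem stmt14 {Ω : Type*} [MeasurableSpace Ω] (μ : Measure Ω) [IsProbabilityMeasure μ]
    (n₁ n₂ w : ℕ) (hw : 1 ≤ w) (hn : n₁ * w ≤ n₂)
    (A : Matrix (Fin n₁) (Fin n₂) (ZMod 2))
    (hrow : ∀ i : Fin n₁, (∃ j, A i j ≠ 0) →
      (Finset.univ.filter (fun j => A i j ≠ 0)).card = w)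
    (hcol : ∀ j : Fin n₂, (Finset.univ.filter (fun i => A i j ≠ 0)).card ≤ 1)
    (e : Ω → Fin n₂ → ZMod 2) (p : ℝ) (hp0 : 0 ≤ p) (hp1 : p ≤ 1)
    (he : LocalStochastic μ (fun ω => Finset.univ.filter (fun j => e ω j ≠ 0)) p) :
    LocalStochastic μ
      (fun ω => Finset.univ.filter (fun i => A.mulVec (e ω) i ≠ 0))
      (4 * p ^ ((2 : ℝ) ^ (-(Nat.clog 2 w : ℝ)))) ∧
    LocalStochastic μ
      (fun ω => Finset.univ.filter (fun i => A.mulVec (e ω) i ≠ 0))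
      (4 * p ^ ((1 : ℝ) / (w : ℝ))) :=
  stmt14_general μ n₁ n₂ w A hrow hcol e p hp0 he
end

section
/- Repeated binary merging of local stochastic parameters: define the merge operation m(p,q) = 2·max{√p, √q} on [0,1]. If w ≥ 1 random subsets S₁,...,S_w of [n], each a local stochastic set of parameter p, are combined by taking unions in the shape of a balanced binary tree, then the union S₁ ∪ ... ∪ S_w is a local stochastic set of parameter 4·p^{2^{−⌈log₂ w⌉}}, which is at most 4·p^{1/w}. -/
open MeasureTheory

set_option maxHeartbeats 1000000

lemma LS_mono {Ω α : Type*} [MeasurableSpace Ω] [DecidableEq α] {μ : Measure Ω} {S : Ω → Finset α}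
    {p q : ℝ} (h : LocalStochastic μ S p) (hp : 0 ≤ p) (hpq : p ≤ q) :
    LocalStochastic μ S q := fun F =>
  (h F).trans (ENNReal.ofReal_le_ofReal (pow_le_pow_left₀ hp hpq _))

lemma LS_trivial {Ω α : Type*} [MeasurableSpace Ω] [DecidableEq α] {μ : Measure Ω} [IsProbabilityMeasure μ]
    {S : Ω → Finset α} {q : ℝ} (hq : 1 ≤ q) : LocalStochastic μ S q := fun F => by
  calc μ {ω | F ⊆ S ω} ≤ 1 := prob_le_one
  _ ≤ ENNReal.ofReal (q ^ F.card) := by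
      rw [← ENNReal.ofReal_one]
      exact ENNReal.ofReal_le_ofReal (one_le_pow₀ hq)

lemma LS_merge {Ω α : Type*} [MeasurableSpace Ω] [DecidableEq α] {μ : Measure Ω} [IsProbabilityMeasure μ]
    {S T : Ω → Finset α} {a : ℝ} (ha : 0 ≤ a)
    (hS : LocalStochastic μ S a) (hT : LocalStochastic μ T a) :
    LocalStochastic μ (fun ω => S ω ∪ T ω) (2 * Real.sqrt a) := by
  rcases le_or_gt 1 a with h1 | h1
  · exact LS_trivial (by nlinarith [Real.one_le_sqrt.mpr h1])
  intro F
  have cover : {ω | F ⊆ S ω ∪ T ω} ⊆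
      ⋃ A ∈ F.powerset, ({ω | A ⊆ S ω} ∩ {ω | F \ A ⊆ T ω}) := by
    intro ω hω
    refine Set.mem_biUnion (x := F ∩ S ω) (Finset.mem_powerset.mpr Finset.inter_subset_left) ?_
    refine ⟨Finset.inter_subset_right, fun x hx => ?_⟩
    simp only [Finset.mem_sdiff, Finset.mem_inter] at hx
    rcases Finset.mem_union.mp (hω hx.1) with h | h
    · exact absurd ⟨hx.1, h⟩ hx.2
    · exact h
  have key : ∀ A ∈ F.powerset,
      μ ({ω | A ⊆ S ω} ∩ {ω | F \ A ⊆ T ω}) ≤ ENNReal.ofReal (Real.sqrt a ^ F.card) := by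
    intro A hA
    have hA' := Finset.mem_powerset.mp hA
    have hcard : (F \ A).card = F.card - A.card := Finset.card_sdiff_of_subset hA'
    have h1' : μ ({ω | A ⊆ S ω} ∩ {ω | F \ A ⊆ T ω}) ≤
        ENNReal.ofReal (min (a ^ A.card) (a ^ (F \ A).card)) := by
      rcases min_cases (a ^ A.card) (a ^ (F \ A).card) with ⟨hm, _⟩ | ⟨hm, _⟩
      · rw [hm]; exact (measure_mono Set.inter_subset_left).trans (hS A)
      · rw [hm]; exact (measure_mono Set.inter_subset_right).trans (hT _)
    refine h1'.trans (ENNReal.ofReal_le_ofReal ?_)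
    have hmin : 0 ≤ min (a ^ A.card) (a ^ (F \ A).card) :=
      le_min (pow_nonneg ha _) (pow_nonneg ha _)
    have hsq : (min (a ^ A.card) (a ^ (F \ A).card)) ^ 2 ≤ a ^ F.card := by
      have : a ^ A.card * a ^ (F \ A).card = a ^ F.card := by
        rw [← pow_add, hcard]
        congr 1
        have := Finset.card_le_card hA'
        omega
        -- A.card + (F.card - A.card) = F.card
      calc (min (a ^ A.card) (a ^ (F \ A).card)) ^ 2
          ≤ a ^ A.card * a ^ (F \ A).card := by
            rw [sq]; exact mul_le_mul (min_le_left _ _) (min_le_right _ _) hmin (pow_nonneg ha _)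
        _ = a ^ F.card := this
    calc min (a ^ A.card) (a ^ (F \ A).card)
        = Real.sqrt ((min (a ^ A.card) (a ^ (F \ A).card)) ^ 2) := (Real.sqrt_sq hmin).symm
      _ ≤ Real.sqrt (a ^ F.card) := Real.sqrt_le_sqrt hsq
      _ = Real.sqrt a ^ F.card := by
          have h2 : (Real.sqrt a ^ F.card) ^ 2 = a ^ F.card := by
            rw [← pow_mul, mul_comm, pow_mul, Real.sq_sqrt ha]
          rw [← h2, Real.sqrt_sq (pow_nonneg (Real.sqrt_nonneg a) _)]
  calc μ {ω | F ⊆ S ω ∪ T ω}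
      ≤ ∑ A ∈ F.powerset, μ ({ω | A ⊆ S ω} ∩ {ω | F \ A ⊆ T ω}) :=
        (measure_mono cover).trans (measure_biUnion_finset_le _ _)
    _ ≤ ∑ A ∈ F.powerset, ENNReal.ofReal (Real.sqrt a ^ F.card) :=
        Finset.sum_le_sum key
    _ = (2 ^ F.card : ℕ) * ENNReal.ofReal (Real.sqrt a ^ F.card) := by
        rw [Finset.sum_const, Finset.card_powerset, nsmul_eq_mul]
    _ = ENNReal.ofReal ((2 * Real.sqrt a) ^ F.card) := by
        rw [mul_pow, ← ENNReal.ofReal_natCast (2 ^ F.card),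
          ← ENNReal.ofReal_mul (by positivity)]
        norm_num

lemma rpow_le_rpow_exp {p e f : ℝ} (hp0 : 0 ≤ p) (hp1 : p ≤ 1) (hf : 0 < f) (hfe : f ≤ e) :
    p ^ e ≤ p ^ f := by
  rcases eq_or_lt_of_le hp0 with h | h
  · rw [← h, Real.zero_rpow (by linarith : (0:ℝ) < e).ne', Real.zero_rpow hf.ne']
  · exact Real.rpow_le_rpow_of_exponent_ge h hp1 hfe

lemma LS_tree {Ω : Type*} [MeasurableSpace Ω] (μ : Measure Ω) [IsProbabilityMeasure μ]
    (n : ℕ) (p : ℝ) (hp0 : 0 ≤ p) (hp1 : p ≤ 1) :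
    ∀ w, 1 ≤ w → ∀ S : Fin w → Ω → Finset (Fin n), (∀ i, LocalStochastic μ (S i) p) →
    LocalStochastic μ (fun ω => Finset.univ.biUnion (fun i => S i ω))
      (4 * p ^ ((2 : ℝ) ^ (-(Nat.clog 2 w : ℝ)))) := by
  intro w
  induction w using Nat.strong_induction_on with
  | _ w IH =>
  intro hw S hS
  rcases eq_or_lt_of_le hw with h1 | h2
  · -- w = 1
    subst h1
    have hfun : (fun ω => Finset.univ.biUnion fun i => S i ω) = S 0 := by
      funext ω
      simp [Finset.univ_unique]
    rw [hfun]
    have hclog : Nat.clog 2 1 = 0 := Nat.clog_of_right_le_one le_rfl 2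
    rw [hclog]
    simp only [Nat.cast_zero, neg_zero, Real.rpow_zero, Real.rpow_one]
    exact LS_mono (hS 0) hp0 (by linarith)
  · -- w ≥ 2
    have hw2 : 2 ≤ w := h2
    set h := (w + 1) / 2 with hh
    have hhw : h < w := by omega
    have hh1 : 1 ≤ h := by omega
    set t := w - h with ht
    have htw : t < w := by omega
    have ht1 : 1 ≤ t := by omega
    have hth : t ≤ h := by omega
    set S₁ : Fin h → Ω → Finset (Fin n) := fun i => S ⟨i.1, lt_trans i.2 hhw⟩ with hS₁
    set S₂ : Fin t → Ω → Finset (Fin n) :=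
      fun j => S ⟨h + j.1, by have := j.2; omega⟩ with hSd
    have hU₁ := IH h hhw hh1 S₁ (fun i => hS _)
    have hU₂ := IH t htw ht1 S₂ (fun j => hS _)
    -- clog facts
    have hcpos : 1 ≤ Nat.clog 2 w := Nat.clog_pos one_lt_two hw2
    have hclogh : Nat.clog 2 h = Nat.clog 2 w - 1 := by
      have := Nat.clog_of_two_le (one_lt_two) hw2
      have he : (w + 2 - 1) / 2 = h := by omega
      rw [he] at this
      omega
    have hclogt : Nat.clog 2 t ≤ Nat.clog 2 h := Nat.clog_mono_right 2 hth
    set e' : ℝ := (2 : ℝ) ^ (-(Nat.clog 2 h : ℝ)) with he'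
    have he'pos : 0 < e' := Real.rpow_pos_of_pos two_pos _
    set A : ℝ := 4 * p ^ e' with hA
    have hApos : 0 ≤ A := by
      have := Real.rpow_nonneg hp0 e'
      positivity
    -- both halves LS with parameter A
    have hU₂' : LocalStochastic μ (fun ω => Finset.univ.biUnion fun j => S₂ j ω) A := by
      refine LS_mono hU₂ (by positivity) ?_
      have hex : e' ≤ (2 : ℝ) ^ (-(Nat.clog 2 t : ℝ)) := by
        apply Real.rpow_le_rpow_of_exponent_le one_le_two
        have : (Nat.clog 2 t : ℝ) ≤ (Nat.clog 2 h : ℝ) := by exact_mod_cast hclogt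
        linarith
      exact mul_le_mul_of_nonneg_left (rpow_le_rpow_exp hp0 hp1 he'pos hex) (by norm_num)
    have hmerge := LS_merge hApos hU₁ hU₂'
    have hfun : (fun ω => Finset.univ.biUnion fun i => S i ω) =
        (fun ω => (Finset.univ.biUnion fun i => S₁ i ω) ∪
                  (Finset.univ.biUnion fun j => S₂ j ω)) := by
      funext ω
      ext x
      simp only [Finset.mem_union, Finset.mem_biUnion, Finset.mem_univ, true_and, hS₁, hSd]
      constructor
      · rintro ⟨i, hi⟩
        by_cases hc : i.1 < h
        · exact Or.inl ⟨⟨i.1, hc⟩, by simpa using hi⟩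
        · refine Or.inr ⟨⟨i.1 - h, by have := i.2; omega⟩, ?_⟩
          have : (⟨h + (i.1 - h), by have := i.2; omega⟩ : Fin w) = i := by
            apply Fin.ext; simp; omega
          simpa [this] using hi
      · rintro (⟨i, hi⟩ | ⟨j, hj⟩)
        · exact ⟨_, hi⟩
        · exact ⟨_, hj⟩
    have hparam : 2 * Real.sqrt A = 4 * p ^ ((2 : ℝ) ^ (-(Nat.clog 2 w : ℝ))) := by
      have h4 : A = (2 : ℝ) ^ 2 * p ^ e' := by rw [hA]; norm_num
      rw [h4, Real.sqrt_mul (by positivity), Real.sqrt_sq (by norm_num : (0:ℝ) ≤ 2)]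
      have hsq : Real.sqrt (p ^ e') = p ^ ((2 : ℝ) ^ (-(Nat.clog 2 w : ℝ))) := by
        rw [Real.sqrt_eq_rpow, ← Real.rpow_mul hp0]
        congr 1
        rw [he', hclogh, Nat.cast_sub hcpos]
        rw [show (1 / 2 : ℝ) = (2 : ℝ) ^ (-1 : ℝ) by
          rw [Real.rpow_neg_one]; norm_num]
        rw [← Real.rpow_add two_pos]
        congr 1
        push_cast
        ring
      rw [hsq]
      ring
    rw [hfun, ← hparam]
    exact hmerge

/-- repeated binary merging of local stochastic parameters.  If
`w ≥ 1` (possibly dependent) random subsets of `[n]`, each local stochastic of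
parameter `p ∈ [0,1]`, are merged pairwise along a balanced binary tree, the union
is local stochastic of parameter `4·p^{2^{−⌈log₂ w⌉}}`, and this parameter is at
most `4·p^{1/(2w)}`. -/
theorem stmt15 {Ω : Type*} [MeasurableSpace Ω] (μ : Measure Ω) [IsProbabilityMeasure μ]
    (n w : ℕ) (hw : 1 ≤ w)
    (S : Fin w → Ω → Finset (Fin n)) (p : ℝ) (hp0 : 0 ≤ p) (hp1 : p ≤ 1)
    (hS : ∀ i, LocalStochastic μ (S i) p) :
    LocalStochastic μ (fun ω => Finset.univ.biUnion (fun i => S i ω))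
      (4 * p ^ ((2 : ℝ) ^ (-(Nat.clog 2 w : ℝ)))) ∧
    4 * p ^ ((2 : ℝ) ^ (-(Nat.clog 2 w : ℝ))) ≤ 4 * p ^ (1 / (2 * (w : ℝ))) := by
  constructor
  · exact LS_tree μ n p hp0 hp1 w hw S hS
  · set c := Nat.clog 2 w with hc
    have hn : 2 ^ c ≤ 2 * w := by
      rcases eq_or_lt_of_le hw with h1 | h2
      · have : c = 0 := by rw [hc, ← h1]; exact Nat.clog_of_right_le_one le_rfl 2
        simp [this]; omega
      · have h2' := Nat.pow_pred_clog_lt_self one_lt_two h2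
        have hcpos : 1 ≤ c := Nat.clog_pos one_lt_two h2
        have : 2 ^ c = 2 * 2 ^ (c - 1) := by
          rw [← pow_succ']
          congr 1
          omega
        rw [this]
        rw [Nat.pred_eq_sub_one, ← hc] at h2'
        omega
    have hwpos : (0 : ℝ) < 2 * (w : ℝ) := by positivity
    have hexp : 1 / (2 * (w : ℝ)) ≤ (2 : ℝ) ^ (-(c : ℝ)) := by
      have h2c : ((2 : ℝ)) ^ (c : ℝ) = ((2 ^ c : ℕ) : ℝ) := by
        rw [Real.rpow_natCast]; push_cast; ring
      rw [Real.rpow_neg (by norm_num : (0:ℝ) ≤ 2), h2c, one_div]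
      apply inv_anti₀
      · positivity
      · exact_mod_cast hn
    exact mul_le_mul_of_nonneg_left
      (rpow_le_rpow_exp hp0 hp1 (by positivity) hexp) (by norm_num)
end
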